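/- arXiv:1612.05334 — 8 statements merged into one kernel-verified Lean document; each statement's English description precedes it below -/
import Mathlib

section
/- There exists a metric d' on ℝ, topologically equivalent to the Euclidean metric, such that the real line with metric d' and Lebesgue measure is a metric measure space of exact polynomial volume growth of degree 1 (i.e. for every x, μ(B_{d'}(x,t))/(c t) → 1 as t → ∞ for some fixed constant c > 0), but the convergence is not uniform over x ∈ ℝ. -/
/-!
Let `h u` be half the distance from `|u|` to `{4ⁿ}`; it is even and `1/2`-Lipschitz, so
`φ u = u + h u` is an increasing homeomorphism of `ℝ`, and `d'(x, y) = |φ⁻¹ x - φ⁻¹ y|` is a metric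
inducing the usual topology. Its closed balls are the intervals `[φ (s - t), φ (s + t)]` with
`s = φ⁻¹ x`, of length `2t + h (s + t) - h (s - t)`. Evenness and the Lipschitz bound give
`|h (s + t) - h (s - t)| ≤ |s|`, so the volume is `2t + O(1)` for each fixed centre. But the gaps
of `{4ⁿ}` grow geometrically: for `s - t = 4ⁿ`, `s + t = (5/2) 4ⁿ` the excess `h (s + t)` is
itself equal to `t`, so the ratio to `2t` is `3/2` at arbitrarily large radii.
-/

open MeasureTheory Filter Metric Set
open scoped NNReal

namespace ExactVolumeGrowth

section IdAddLipschitz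

variable {K : ℝ≥0} {h : ℝ → ℝ}

theorem one_sub_mul_le_id_add_sub (hh : LipschitzWith K h) {u v : ℝ} (huv : u ≤ v) :
    (1 - K) * (v - u) ≤ (v + h v) - (u + h u) := by
  have := hh.le_add_mul u v
  rw [Real.dist_eq, abs_of_nonpos (by linarith)] at this
  linarith

theorem strictMono_id_add (hh : LipschitzWith K h) (hK : K < 1) :
    StrictMono fun u => u + h u := fun u v huv => by
  have := one_sub_mul_le_id_add_sub hh huv.le
  have : 0 < (1 - (K : ℝ)) * (v - u) := mul_pos (by simpa using hK) (by linarith)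
  linarith

theorem surjective_id_add (hh : LipschitzWith K h) (hK : K < 1) :
    Function.Surjective fun u => u + h u := by
  have hK' : 0 < 1 - (K : ℝ) := by simpa using hK
  refine (continuous_id.add hh.continuous).surjective ?_ ?_
  · refine tendsto_atTop_mono' _ ?_
      (tendsto_atTop_add_const_left _ (0 + h 0) (tendsto_id.const_mul_atTop hK'))
    filter_upwards [eventually_ge_atTop 0] with u hu
    have := one_sub_mul_le_id_add_sub hh hu
    simp only [id, Pi.add_apply]
    linarith
  · refine tendsto_atBot_mono' _ ?_
      (tendsto_atBot_add_const_left _ (0 + h 0) (tendsto_id.const_mul_atBot hK'))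
    filter_upwards [eventually_le_atBot 0] with u hu
    have := one_sub_mul_le_id_add_sub hh hu
    simp only [id, Pi.add_apply]
    linarith

noncomputable def idAddOrderIso (hh : LipschitzWith K h) (hK : K < 1) : ℝ ≃o ℝ :=
  StrictMono.orderIsoOfSurjective _ (strictMono_id_add hh hK) (surjective_id_add hh hK)

@[simp]
theorem idAddOrderIso_apply (hh : LipschitzWith K h) (hK : K < 1) (u : ℝ) :
    idAddOrderIso hh hK u = u + h u := rfl

theorem abs_sub_le_of_even (hh : LipschitzWith K h) (heven : ∀ u, h (-u) = h u) (s t : ℝ) :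
    |h (s + t) - h (s - t)| ≤ 2 * K * |s| := by
  have := hh.dist_le_mul (s + t) (t - s)
  rw [Real.dist_eq, Real.dist_eq, ← heven (t - s), neg_sub,
    show s + t - (t - s) = 2 * s by ring, abs_mul, abs_two] at this
  linarith

end IdAddLipschitz

section TransportMetric

noncomputable abbrev transportMetric (φ : ℝ ≃o ℝ) : MetricSpace ℝ :=
  MetricSpace.induced φ.symm φ.symm.injective inferInstance

variable (φ : ℝ ≃o ℝ)

theorem transportMetric_topology :
    (transportMetric φ).toUniformSpace.toTopologicalSpace = (inferInstance : TopologicalSpace ℝ) :=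
  UniformSpace.toTopologicalSpace_comap.trans φ.symm.toHomeomorph.induced_eq

theorem closedBall_transportMetric (x t : ℝ) :
    @closedBall ℝ (transportMetric φ).toPseudoMetricSpace x t
      = Icc (φ (φ.symm x - t)) (φ (φ.symm x + t)) := by
  change φ.symm ⁻¹' closedBall (φ.symm x) t = _
  rw [Real.closedBall_eq_Icc, OrderIso.preimage_Icc, OrderIso.symm_symm]

theorem volume_closedBall_transportMetric (x : ℝ) {t : ℝ} (ht : 0 ≤ t) :
    (volume (@closedBall ℝ (transportMetric φ).toPseudoMetricSpace x t)).toReal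
      = φ (φ.symm x + t) - φ (φ.symm x - t) := by
  rw [closedBall_transportMetric, Real.volume_Icc, ENNReal.toReal_ofReal]
  exact sub_nonneg.mpr (φ.monotone (by linarith))

theorem tendsto_volume_closedBall_transportMetric (x C : ℝ)
    (hC : ∀ t, |φ (φ.symm x + t) - φ (φ.symm x - t) - 2 * t| ≤ C) :
    Tendsto (fun t => (volume (@closedBall ℝ (transportMetric φ).toPseudoMetricSpace x t)).toReal
      / (2 * t)) atTop (nhds 1) := by
  set s := φ.symm x
  have herr : Tendsto (fun t => (φ (s + t) - φ (s - t) - 2 * t) / (2 * t)) atTop (nhds 0) := by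
    refine squeeze_zero_norm' ?_
      (tendsto_const_nhds.div_atTop (tendsto_id.const_mul_atTop two_pos) : Tendsto
        (fun t : ℝ => C / (2 * t)) atTop (nhds 0))
    filter_upwards [eventually_gt_atTop 0] with t ht
    rw [Real.norm_eq_abs, abs_div, abs_of_pos (show 0 < 2 * t by linarith)]
    exact div_le_div_of_nonneg_right (hC t) (by linarith)
  have hlim : Tendsto (fun t => 1 + (φ (s + t) - φ (s - t) - 2 * t) / (2 * t)) atTop (nhds 1) := by
    simpa using herr.const_add 1
  refine hlim.congr' ?_
  filter_upwards [eventually_gt_atTop 0] with t ht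
  rw [volume_closedBall_transportMetric φ x ht.le]
  field_simp
  ring

theorem not_tendstoUniformly_volume_closedBall_transportMetric
    (hgap : ∃ᶠ t in atTop, ∃ s, 3 * t ≤ φ (s + t) - φ (s - t)) :
    ¬ TendstoUniformly
      (fun t x => (volume (@closedBall ℝ (transportMetric φ).toPseudoMetricSpace x t)).toReal
        / (2 * t)) (fun _ => 1) atTop := by
  intro hunif
  obtain ⟨t, ⟨s, hs⟩, ht, hclose⟩ :=
    (hgap.and_eventually ((eventually_gt_atTop 0).and
      (Metric.tendstoUniformly_iff.mp hunif (1 / 2) one_half_pos))).exists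
  have hratio : 3 / 2 ≤ (volume (@closedBall ℝ (transportMetric φ).toPseudoMetricSpace
      (φ s) t)).toReal / (2 * t) := by
    rw [volume_closedBall_transportMetric φ _ ht.le, OrderIso.symm_apply_apply,
      le_div_iff₀ (by positivity)]
    linarith
  have := hclose (φ s)
  rw [Real.dist_eq, abs_sub_lt_iff] at this
  linarith

end TransportMetric

section PowersOfFour

noncomputable def powGap (u : ℝ) : ℝ := infDist |u| (range ((4 : ℝ) ^ ·)) / 2

theorem lipschitzWith_powGap : LipschitzWith (1 / 2) powGap := by
  refine LipschitzWith.of_dist_le_mul fun u v => ?_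
  have := (lipschitz_infDist_pt (range ((4 : ℝ) ^ ·))).dist_le_mul |u| |v|
  simp only [powGap, Real.dist_eq, ← sub_div, abs_div, abs_two, NNReal.coe_one, one_mul] at this ⊢
  push_cast
  linarith [abs_abs_sub_abs_le u v]

theorem powGap_neg (u : ℝ) : powGap (-u) = powGap u := by
  rw [powGap, powGap, abs_neg]

theorem powGap_pow (n : ℕ) : powGap ((4 : ℝ) ^ n) = 0 := by
  rw [powGap, abs_of_pos (by positivity), infDist_zero_of_mem (mem_range_self n), zero_div]

theorem le_powGap_mul_pow (n : ℕ) : 3 / 4 * (4 : ℝ) ^ n ≤ powGap (5 / 2 * 4 ^ n) := by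
  rw [powGap, abs_of_pos (by positivity), le_div_iff₀ two_pos,
    le_infDist (range_nonempty _)]
  rintro _ ⟨k, rfl⟩
  rw [Real.dist_eq]
  dsimp only
  have : (0 : ℝ) < 4 ^ n := by positivity
  rcases le_or_gt k n with hk | hk
  · have := pow_le_pow_right₀ (by norm_num : (1 : ℝ) ≤ 4) hk
    rw [abs_of_nonneg (by linarith)]
    linarith
  · have := pow_le_pow_right₀ (by norm_num : (1 : ℝ) ≤ 4) (Nat.succ_le_of_lt hk)
    rw [pow_succ] at this
    rw [abs_of_nonpos (by linarith)]
    linarith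

theorem frequently_le_powGap_sub :
    ∃ᶠ t in atTop, ∃ s, t ≤ powGap (s + t) - powGap (s - t) := by
  rw [frequently_atTop]
  intro a
  obtain ⟨n, hn⟩ := pow_unbounded_of_one_lt (4 / 3 * a) (by norm_num : (1 : ℝ) < 4)
  refine ⟨3 / 4 * 4 ^ n, by linarith, 7 / 4 * 4 ^ n, ?_⟩
  have hlow := powGap_pow n
  have hhigh := le_powGap_mul_pow n
  ring_nf at hlow hhigh ⊢
  linarith

end PowersOfFour

end ExactVolumeGrowth

open ExactVolumeGrowth

theorem stmt2 :
    ∃ (m : MetricSpace ℝ) (c : ℝ), 0 < c ∧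
      m.toUniformSpace.toTopologicalSpace = (inferInstance : TopologicalSpace ℝ) ∧
      (∀ x : ℝ, Tendsto
        (fun t : ℝ => (volume (@Metric.closedBall ℝ m.toPseudoMetricSpace x t)).toReal / (c * t))
        atTop (nhds 1)) ∧
      ¬ TendstoUniformly
        (fun (t : ℝ) (x : ℝ) =>
          (volume (@Metric.closedBall ℝ m.toPseudoMetricSpace x t)).toReal / (c * t))
        (fun _ => 1) atTop := by
  set φ := idAddOrderIso lipschitzWith_powGap (by norm_num)
  refine ⟨transportMetric φ, 2, two_pos, transportMetric_topology φ, fun x => ?_,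
    not_tendstoUniformly_volume_closedBall_transportMetric φ ?_⟩
  · refine tendsto_volume_closedBall_transportMetric φ x |φ.symm x| fun t => ?_
    have := abs_sub_le_of_even lipschitzWith_powGap powGap_neg (φ.symm x) t
    simp only [φ, idAddOrderIso_apply]
    convert this using 2 <;> push_cast <;> ring
  · refine frequently_le_powGap_sub.mono fun t ⟨s, hs⟩ => ⟨s, ?_⟩
    simp only [φ, idAddOrderIso_apply]
    linarith
end

section
/- Let (X,d,μ) be a metric measure space of exact polynomial volume growth of degree q > 0 and let X₀ ⊆ X be a bounded set. There exists ε₀ ∈ (0,1) such that for every ε ∈ (0,ε₀) there exists s = s(ε,X₀) with the following property: if 𝒞 is a countable collection of pairwise disjoint closed balls B(x,r) with all centers x ∈ X₀ and all radii r ≥ s, then for every δ with 0 < δ ≤ min(ε/(4q), 1/2), the union of the δ-interiors B(x,(1−δ)r) over all balls B(x,r) ∈ 𝒞 has measure at least (1−ε) times the measure of the union of the balls in 𝒞. -/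
/-!
All centres lie in one ball `B(x₀, D)`, so `B(x, r) ⊆ B(x₀, r + D)` and
`B(x₀, (1 - δ) r - D) ⊆ B(x, (1 - δ) r)`. Exact growth gives `μ B(x₀, t ± D) ~ c t^q`, hence for
all large radii the measure of the shrunken ball is at least `(1 - ε/2) (1 - δ)^q` times that of
the ball, and `(1 - δ)^q ≥ 1 - 2qδ ≥ 1 - ε/2` makes this factor at least `(1 - ε/2)² ≥ 1 - ε`.
Summing over the disjoint balls proves the claim.
-/

open Metric MeasureTheory Filter Topology

theorem Real.one_sub_two_mul_mul_le_rpow_one_sub {q δ : ℝ} (hq : 0 ≤ q) (hδ0 : 0 ≤ δ)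
    (hδ : δ ≤ 1 / 2) : 1 - 2 * q * δ ≤ (1 - δ) ^ q := by
  have hpos : 0 < 1 - δ := by linarith
  have hlog : -(2 * δ) ≤ Real.log (1 - δ) := by
    have hinv : (1 - δ)⁻¹ ≤ 1 + 2 * δ := by
      rw [inv_le_iff_one_le_mul₀ hpos]; nlinarith
    linarith [Real.one_sub_inv_le_log_of_pos hpos]
  calc 1 - 2 * q * δ ≤ Real.log (1 - δ) * q + 1 := by nlinarith
    _ ≤ (1 - δ) ^ q := by
      rw [Real.rpow_def_of_pos hpos]; exact Real.add_one_le_exp _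

theorem tendsto_comp_add_div_rpow {f : ℝ → ℝ} {c q : ℝ}
    (hf : Tendsto (fun t => f t / (c * t ^ q)) atTop (𝓝 1)) (a : ℝ) :
    Tendsto (fun t => f (t + a) / (c * t ^ q)) atTop (𝓝 1) := by
  have hshift : Tendsto (fun t => (1 + a * t⁻¹) ^ q) atTop (𝓝 1) := by
    simpa using ((tendsto_inv_atTop_zero.const_mul a).const_add 1).rpow_const
      (p := q) (Or.inl (by norm_num))
  have := (hf.comp (tendsto_atTop_add_const_right _ a tendsto_id)).mul hshift
  rw [mul_one] at this
  refine this.congr' ?_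
  filter_upwards [eventually_gt_atTop 0, eventually_gt_atTop (-a)] with t ht hta
  have hta' : 1 + a * t⁻¹ = (t + a) / t := by field_simp
  rw [Function.comp_apply, id, hta', Real.div_rpow (by linarith) ht.le]
  have := Real.rpow_pos_of_pos (show 0 < t + a by linarith) q
  field_simp

theorem exists_forall_mul_le_of_tendsto_div_rpow {f₁ f₂ : ℝ → ℝ} {c q κ : ℝ} (hc : 0 < c)
    (h₁ : Tendsto (fun t => f₁ t / (c * t ^ q)) atTop (𝓝 1))
    (h₂ : Tendsto (fun t => f₂ t / (c * t ^ q)) atTop (𝓝 1)) (hκ : κ < 1) :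
    ∃ s > 0, ∀ t u, s ≤ t → s ≤ u → κ * f₁ t * u ^ q ≤ f₂ u * t ^ q := by
  have h : ∀ᶠ p : ℝ × ℝ in atTop ×ˢ atTop,
      κ * (f₁ p.1 / (c * p.1 ^ q)) < f₂ p.2 / (c * p.2 ^ q) :=
    ((h₁.comp tendsto_fst).const_mul κ).eventually_lt (h₂.comp tendsto_snd) (by simpa using hκ)
  rw [prod_atTop_atTop_eq, eventually_atTop_prod_self] at h
  obtain ⟨s, hs⟩ := h
  refine ⟨max s 1, by positivity, fun t u ht hu => ?_⟩
  have htq := Real.rpow_pos_of_pos (one_pos.trans_le ((le_max_right _ _).trans ht)) q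
  have huq := Real.rpow_pos_of_pos (one_pos.trans_le ((le_max_right _ _).trans hu)) q
  have := hs t u ((le_max_left _ _).trans ht) ((le_max_left _ _).trans hu)
  rw [mul_div_assoc', div_lt_div_iff₀ (by positivity) (by positivity)] at this
  nlinarith

theorem mul_measure_iUnion_le_measure_iUnion {X ι : Type*} [MeasurableSpace X] [Countable ι]
    {μ : Measure X} {A B : ι → Set X} {a : ENNReal} (hB : ∀ i, MeasurableSet (B i))
    (hBd : Pairwise (Function.onFun Disjoint B)) (h : ∀ i, a * μ (A i) ≤ μ (B i)) :
    a * μ (⋃ i, A i) ≤ μ (⋃ i, B i) :=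
  calc a * μ (⋃ i, A i) ≤ a * ∑' i, μ (A i) := by gcongr; exact measure_iUnion_le A
    _ = ∑' i, a * μ (A i) := ENNReal.tsum_mul_left.symm
    _ ≤ ∑' i, μ (B i) := ENNReal.tsum_le_tsum h
    _ ≤ μ (⋃ i, B i) := tsum_meas_le_meas_iUnion_of_disjoint μ hB hBd

section

variable {X : Type*} [MetricSpace X] [MeasurableSpace X] {μ : Measure X}

theorem ofReal_mul_measure_closedBall_le_of_dist_le {x x₀ : X} {a D r r' : ℝ}
    (hx : dist x x₀ ≤ D) (hfin : μ (closedBall x₀ (r + D)) ≠ ⊤) (ha : 0 ≤ a)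
    (h : a * (μ (closedBall x₀ (r + D))).toReal ≤ (μ (closedBall x₀ (r' - D))).toReal) :
    ENNReal.ofReal a * μ (closedBall x r) ≤ μ (closedBall x r') :=
  calc ENNReal.ofReal a * μ (closedBall x r)
      ≤ ENNReal.ofReal a * μ (closedBall x₀ (r + D)) := by
        gcongr; exact closedBall_subset_closedBall' (by linarith)
    _ = ENNReal.ofReal (a * (μ (closedBall x₀ (r + D))).toReal) := by
        rw [ENNReal.ofReal_mul ha, ENNReal.ofReal_toReal hfin]
    _ ≤ ENNReal.ofReal (μ (closedBall x₀ (r' - D))).toReal := ENNReal.ofReal_le_ofReal h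
    _ ≤ μ (closedBall x r') := ENNReal.ofReal_toReal_le.trans
        (measure_mono (closedBall_subset_closedBall' (by rw [dist_comm]; linarith)))

theorem exists_forall_ofReal_one_sub_mul_measure_closedBall_le {c q ε D : ℝ} {x₀ : X}
    (hc : 0 < c) (hq : 0 < q) (hfin : ∀ t, 0 < t → μ (closedBall x₀ t) ≠ ⊤)
    (hgrowth : Tendsto (fun t => (μ (closedBall x₀ t)).toReal / (c * t ^ q)) atTop (𝓝 1))
    (hD : 0 ≤ D) (hε : ε ∈ Set.Ioo 0 1) :
    ∃ s > 0, ∀ x, dist x x₀ ≤ D → ∀ r, s ≤ r → ∀ δ, 0 ≤ δ → δ ≤ min (ε / (4 * q)) (1 / 2) →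
      ENNReal.ofReal (1 - ε) * μ (closedBall x r) ≤ μ (closedBall x ((1 - δ) * r)) := by
  obtain ⟨ε_pos, ε_lt_one⟩ := hε
  obtain ⟨s, hs0, hs⟩ := exists_forall_mul_le_of_tendsto_div_rpow hc
    (tendsto_comp_add_div_rpow hgrowth D) (tendsto_comp_add_div_rpow hgrowth (-D))
    (show 1 - ε / 2 < 1 by linarith)
  refine ⟨2 * s, by positivity, fun x hx r hr δ hδ0 hδ => ?_⟩
  have hδ2 : δ ≤ 1 / 2 := hδ.trans (min_le_right _ _)
  have hqδ : 4 * q * δ ≤ ε := by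
    have := hδ.trans (min_le_left _ _)
    rwa [le_div_iff₀' (by positivity)] at this
  have hr : 0 < r := by linarith
  refine ofReal_mul_measure_closedBall_le_of_dist_le hx (hfin _ (by linarith)) (by linarith) ?_
  have hcmp := hs r ((1 - δ) * r) (by linarith) (by nlinarith)
  rw [Real.mul_rpow (by linarith) hr.le, ← sub_eq_add_neg] at hcmp
  have hfactor : 1 - ε ≤ (1 - ε / 2) * (1 - δ) ^ q := by
    nlinarith [Real.one_sub_two_mul_mul_le_rpow_one_sub hq.le hδ0 hδ2]
  calc (1 - ε) * (μ (closedBall x₀ (r + D))).toReal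
      ≤ (1 - ε / 2) * (1 - δ) ^ q * (μ (closedBall x₀ (r + D))).toReal := by gcongr
    _ ≤ (μ (closedBall x₀ ((1 - δ) * r - D))).toReal :=
        le_of_mul_le_mul_right (by linarith) (Real.rpow_pos_of_pos hr q)

theorem Bornology.IsBounded.exists_forall_ofReal_one_sub_mul_measure_closedBall_le
    {c q ε : ℝ} {X₀ : Set X} (hX₀ : Bornology.IsBounded X₀) (hc : 0 < c) (hq : 0 < q)
    (hfin : ∀ x t, 0 < t → μ (closedBall x t) ≠ ⊤)
    (hgrowth : ∀ x, Tendsto (fun t => (μ (closedBall x t)).toReal / (c * t ^ q)) atTop (𝓝 1))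
    (hε : ε ∈ Set.Ioo 0 1) :
    ∃ s > 0, ∀ x ∈ X₀, ∀ r, s ≤ r → ∀ δ, 0 ≤ δ → δ ≤ min (ε / (4 * q)) (1 / 2) →
      ENNReal.ofReal (1 - ε) * μ (closedBall x r) ≤ μ (closedBall x ((1 - δ) * r)) := by
  rcases X₀.eq_empty_or_nonempty with rfl | ⟨x₀, hx₀⟩
  · exact ⟨1, one_pos, by simp⟩
  obtain ⟨D, hD⟩ := hX₀.subset_closedBall x₀
  obtain ⟨s, hs0, hs⟩ := _root_.exists_forall_ofReal_one_sub_mul_measure_closedBall_le hc hq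
    (hfin x₀) (hgrowth x₀) (dist_nonneg.trans (hD hx₀)) hε
  exact ⟨s, hs0, fun x hx => hs x (hD hx)⟩

end

theorem stmt3 {X : Type*} [MetricSpace X] [MeasurableSpace X] [BorelSpace X] (μ : Measure X)
    (c q : ℝ) (hc : 0 < c) (hq : 0 < q)
    (hpos : ∀ (x : X) (r : ℝ), 0 < r → 0 < μ (closedBall x r) ∧ μ (closedBall x r) < ⊤)
    (hgrowth : ∀ x : X, Tendsto (fun t : ℝ => (μ (closedBall x t)).toReal / (c * t ^ q))
      atTop (nhds 1))
    (X₀ : Set X) (hX₀ : Bornology.IsBounded X₀) :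
    ∃ ε₀ ∈ Set.Ioo (0:ℝ) 1, ∀ ε ∈ Set.Ioo (0:ℝ) ε₀, ∃ s : ℝ,
      ∀ (ι : Type) (_ : Countable ι) (ctr : ι → X) (rad : ι → ℝ),
        (∀ i, ctr i ∈ X₀) → (∀ i, s ≤ rad i) →
        (Pairwise fun i j => Disjoint (closedBall (ctr i) (rad i)) (closedBall (ctr j) (rad j))) →
        ∀ δ : ℝ, 0 < δ → δ ≤ min (ε / (4 * q)) (1/2) →
          ENNReal.ofReal (1 - ε) * μ (⋃ i, closedBall (ctr i) (rad i))
            ≤ μ (⋃ i, closedBall (ctr i) ((1 - δ) * rad i)) := by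
  refine ⟨1 / 2, by norm_num, fun ε hε => ?_⟩
  obtain ⟨s, hs0, hs⟩ := hX₀.exists_forall_ofReal_one_sub_mul_measure_closedBall_le hc hq
    (fun x t ht => (hpos x t ht).2.ne) hgrowth ⟨hε.1, hε.2.trans (by norm_num)⟩
  refine ⟨s, fun ι _ ctr rad hctr hrad hdisj δ hδ0 hδ => ?_⟩
  have hshrink : ∀ i, closedBall (ctr i) ((1 - δ) * rad i) ⊆ closedBall (ctr i) (rad i) :=
    fun i => closedBall_subset_closedBall (by nlinarith [hrad i])
  exact mul_measure_iUnion_le_measure_iUnion (fun _ => measurableSet_closedBall)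
    (fun i j hij => (hdisj hij).mono (hshrink i) (hshrink j))
    (fun i => hs _ (hctr i) _ (hrad i) δ hδ0.le hδ)
end

section
/- Let (X,d,μ) be a metric measure space of exact polynomial volume growth of degree q > 0 and let X₀ ⊆ X be a bounded set. There exists ε₀ ∈ (0,1) such that for every ε ∈ (0,ε₀) there exists s = s(ε,X₀) with the following property: if 𝒞 is a countable collection of pairwise disjoint closed balls B(x,r) with all centers x ∈ X₀ and all radii r ≥ s, then for every δ ∈ (0, ε/(4q)), μ(⋃_{B(x,r)∈𝒞} B(x,r)) ≥ (1−ε)·μ(⋃_{B(x,r)∈𝒞} B(x,(1+δ)r)). -/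
open Metric MeasureTheory Filter


set_option maxHeartbeats 1000000 in
lemma numeric_core (c q ε δ D t₁ t₂ : ℝ) (hc : 0 < c) (hq : 0 < q)
    (hε : 0 < ε) (hε2 : ε < 1/2) (hδ0 : 0 < δ) (hδ : δ < ε / (4*q)) (hD : 0 ≤ D)
    (ht₁ : 1 ≤ t₁) (huD : 2*q*D ≤ ε/8 * t₁) (ht₂ : t₂ ≤ (1+δ) * (t₁ + 2*D))
    (ht₂0 : 0 < t₂) :
    (1-ε) * ((1+ε/8) * (c * t₂ ^ q)) ≤ (1-ε/8) * (c * t₁ ^ q) := by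
  have ht₁0 : (0:ℝ) < t₁ := by linarith
  have hu : 0 ≤ 2*D/t₁ := by positivity
  have h1 : t₂ ≤ t₁ * ((1+δ) * (1 + 2*D/t₁)) := by
    have he : t₁ * ((1+δ) * (1 + 2*D/t₁)) = (1+δ) * (t₁ + 2*D) := by
      field_simp
    rw [he]; exact ht₂
  have hfac0 : (0:ℝ) ≤ (1+δ) * (1 + 2*D/t₁) := by positivity
  have h2 : t₂ ^ q ≤ (t₁ * ((1+δ) * (1 + 2*D/t₁))) ^ q :=
    Real.rpow_le_rpow ht₂0.le h1 hq.le
  have h3 : (t₁ * ((1+δ) * (1 + 2*D/t₁))) ^ q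
      = t₁ ^ q * ((1+δ) ^ q * (1 + 2*D/t₁) ^ q) := by
    rw [Real.mul_rpow ht₁0.le hfac0, Real.mul_rpow (by linarith) (by positivity)]
  have hδq : δ * q ≤ ε/4 := by
    have h := mul_le_mul_of_nonneg_right hδ.le hq.le
    have he : ε/(4*q)*q = ε/4 := by field_simp
    rw [he] at h; linarith
  have h4 : (1+δ) ^ q ≤ Real.exp (ε/4) := by
    have h0 := Real.rpow_le_rpow (by linarith) (by linarith [Real.add_one_le_exp δ] :
      (1:ℝ)+δ ≤ Real.exp δ) hq.le
    calc (1+δ) ^ q ≤ (Real.exp δ) ^ q := h0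
      _ = Real.exp (δ * q) := (Real.exp_mul δ q).symm
      _ ≤ Real.exp (ε/4) := Real.exp_le_exp.mpr hδq
  have huq : 2*D/t₁ * q ≤ ε/8 := by
    rw [div_mul_eq_mul_div, div_le_iff₀ ht₁0]
    nlinarith
  have h5 : (1 + 2*D/t₁) ^ q ≤ Real.exp (ε/8) := by
    have h0 := Real.rpow_le_rpow (by linarith) (by linarith [Real.add_one_le_exp (2*D/t₁)] :
      (1:ℝ)+2*D/t₁ ≤ Real.exp (2*D/t₁)) hq.le
    calc (1 + 2*D/t₁) ^ q ≤ (Real.exp (2*D/t₁)) ^ q := h0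
      _ = Real.exp (2*D/t₁ * q) := (Real.exp_mul _ q).symm
      _ ≤ Real.exp (ε/8) := Real.exp_le_exp.mpr huq
  -- exp(3ε/8) ≤ 1/(1-3ε/8)
  have hexp : Real.exp (ε/4) * Real.exp (ε/8) * (1 - 3*ε/8) ≤ 1 := by
    rw [← Real.exp_add]
    have h38 : ε/4 + ε/8 = 3*ε/8 := by ring
    rw [h38]
    have hpos := Real.exp_pos (3*ε/8)
    have hneg : 1 - 3*ε/8 ≤ Real.exp (-(3*ε/8)) := by
      linarith [Real.add_one_le_exp (-(3*ε/8))]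
    calc Real.exp (3*ε/8) * (1 - 3*ε/8) ≤ Real.exp (3*ε/8) * Real.exp (-(3*ε/8)) :=
          mul_le_mul_of_nonneg_left hneg hpos.le
      _ = 1 := by rw [← Real.exp_add]; simp
  have hP : (0:ℝ) < c * t₁ ^ q := by positivity
  have ha0 : (0:ℝ) ≤ (1+δ) ^ q := Real.rpow_nonneg (by linarith) q
  have hb0 : (0:ℝ) ≤ (1 + 2*D/t₁) ^ q := Real.rpow_nonneg (by linarith) q
  have key1 : c * t₂ ^ q ≤ (c * t₁ ^ q) * (Real.exp (ε/4) * Real.exp (ε/8)) := by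
    calc c * t₂ ^ q ≤ c * (t₁ ^ q * ((1+δ) ^ q * (1 + 2*D/t₁) ^ q)) := by
          apply mul_le_mul_of_nonneg_left _ hc.le
          rw [← h3]; exact h2
      _ = (c * t₁ ^ q) * ((1+δ) ^ q * (1 + 2*D/t₁) ^ q) := by ring
      _ ≤ (c * t₁ ^ q) * (Real.exp (ε/4) * Real.exp (ε/8)) := by
          apply mul_le_mul_of_nonneg_left _ hP.le
          exact mul_le_mul h4 h5 hb0 (Real.exp_pos _).le
  have hK : (1-ε)*(1+ε/8) ≤ (1-ε/8)*(1-3*ε/8) := by nlinarith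
  have hKn : (0:ℝ) ≤ (1-ε)*(1+ε/8) := by nlinarith
  have ht₂q : (0:ℝ) ≤ c * t₂ ^ q := by positivity
  calc (1-ε) * ((1+ε/8) * (c * t₂ ^ q)) = ((1-ε)*(1+ε/8)) * (c * t₂ ^ q) := by ring
    _ ≤ ((1-ε/8)*(1-3*ε/8)) * ((c * t₁ ^ q) * (Real.exp (ε/4) * Real.exp (ε/8))) :=
        mul_le_mul hK key1 ht₂q (by nlinarith)
    _ = (1-ε/8) * ((c * t₁ ^ q) * (Real.exp (ε/4) * Real.exp (ε/8) * (1-3*ε/8))) := by ring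
    _ ≤ (1-ε/8) * ((c * t₁ ^ q) * 1) := by
        apply mul_le_mul_of_nonneg_left _ (by linarith : (0:ℝ) ≤ 1-ε/8)
        exact mul_le_mul_of_nonneg_left hexp hP.le
    _ = (1-ε/8) * (c * t₁ ^ q) := by ring

lemma ball_est {X : Type*} [MetricSpace X] [MeasurableSpace X] [BorelSpace X] (μ : Measure X)
    (c q ε δ D T : ℝ) (x₀ x : X) (r : ℝ)
    (hc : 0 < c) (hq : 0 < q) (hε : 0 < ε) (hε2 : ε < 1/2)
    (hδ0 : 0 < δ) (hδ : δ < ε/(4*q)) (hD : 0 ≤ D) (hxD : dist x x₀ ≤ D) (hT : 1 ≤ T)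
    (hlow : ∀ t, T ≤ t → (1 - ε/8) * (c * t ^ q) ≤ (μ (closedBall x₀ t)).toReal)
    (hup : ∀ t, T ≤ t → (μ (closedBall x₀ t)).toReal ≤ (1 + ε/8) * (c * t ^ q))
    (hfin : ∀ (y : X) (t : ℝ), 0 < t → μ (closedBall y t) < ⊤)
    (hr : T + D ≤ r) (hr2 : 16*q*D/ε + D + 1 ≤ r) :
    ENNReal.ofReal (1-ε) * μ (closedBall x ((1+δ)*r)) ≤ μ (closedBall x r) := by
  have hqD : 0 ≤ 16*q*D/ε := by positivity
  have hr1 : 1 ≤ r - D := by linarith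
  have hrpos : 0 < r := by linarith
  set t₁ := r - D with ht₁def
  set t₂ := (1+δ)*r + D with ht₂def
  have ht₂pos : 0 < t₂ := by nlinarith
  have ht₁T : T ≤ t₁ := by simp only [ht₁def]; linarith
  have ht₂T : T ≤ t₂ := by simp only [ht₂def]; nlinarith
  have hsub1 : closedBall x ((1+δ)*r) ⊆ closedBall x₀ t₂ :=
    closedBall_subset_closedBall' (by simp only [ht₂def]; linarith)
  have hsub2 : closedBall x₀ t₁ ⊆ closedBall x r :=
    closedBall_subset_closedBall' (by rw [dist_comm]; simp only [ht₁def]; linarith)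
  have hfx2 : μ (closedBall x ((1+δ)*r)) ≠ ⊤ := (hfin x _ (by nlinarith)).ne
  have hfxr : μ (closedBall x r) ≠ ⊤ := (hfin x r hrpos).ne
  have hfx₀2 : μ (closedBall x₀ t₂) ≠ ⊤ := (hfin x₀ t₂ ht₂pos).ne
  have m₂ : (μ (closedBall x ((1+δ)*r))).toReal ≤ (μ (closedBall x₀ t₂)).toReal :=
    ENNReal.toReal_mono hfx₀2 (measure_mono hsub1)
  have m₁ : (μ (closedBall x₀ t₁)).toReal ≤ (μ (closedBall x r)).toReal :=
    ENNReal.toReal_mono hfxr (measure_mono hsub2)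
  have huD : 2*q*D ≤ ε/8 * t₁ := by
    have h16 : ε/8 * (16*q*D/ε) = 2*q*D := by field_simp; ring
    have : ε/8 * (16*q*D/ε) ≤ ε/8 * t₁ := by
      apply mul_le_mul_of_nonneg_left _ (by linarith)
      simp only [ht₁def]; linarith
    linarith
  have ht₂le : t₂ ≤ (1+δ) * (t₁ + 2*D) := by simp only [ht₁def, ht₂def]; nlinarith
  have core := numeric_core c q ε δ D t₁ t₂ hc hq hε hε2 hδ0 hδ hD hr1 huD ht₂le ht₂pos
  have hreal : (1-ε) * (μ (closedBall x ((1+δ)*r))).toReal ≤ (μ (closedBall x r)).toReal := by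
    have c1 : (1-ε) * (μ (closedBall x ((1+δ)*r))).toReal
        ≤ (1-ε) * ((1+ε/8) * (c * t₂ ^ q)) := by
      apply mul_le_mul_of_nonneg_left _ (by linarith)
      exact le_trans m₂ (hup t₂ ht₂T)
    have c2 := hlow t₁ ht₁T
    linarith
  calc ENNReal.ofReal (1-ε) * μ (closedBall x ((1+δ)*r))
      = ENNReal.ofReal ((1-ε) * (μ (closedBall x ((1+δ)*r))).toReal) := by
        rw [ENNReal.ofReal_mul (by linarith), ENNReal.ofReal_toReal hfx2]
    _ ≤ ENNReal.ofReal (μ (closedBall x r)).toReal := ENNReal.ofReal_le_ofReal hreal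
    _ = μ (closedBall x r) := ENNReal.ofReal_toReal hfxr

theorem stmt4 {X : Type*} [MetricSpace X] [MeasurableSpace X] [BorelSpace X] (μ : Measure X)
    (c q : ℝ) (hc : 0 < c) (hq : 0 < q)
    (hpos : ∀ (x : X) (r : ℝ), 0 < r → 0 < μ (closedBall x r) ∧ μ (closedBall x r) < ⊤)
    (hgrowth : ∀ x : X, Tendsto (fun t : ℝ => (μ (closedBall x t)).toReal / (c * t ^ q))
      atTop (nhds 1))
    (X₀ : Set X) (hX₀ : Bornology.IsBounded X₀) :
    ∃ ε₀ ∈ Set.Ioo (0:ℝ) 1, ∀ ε ∈ Set.Ioo (0:ℝ) ε₀, ∃ s : ℝ,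
      ∀ (ι : Type) (_ : Countable ι) (ctr : ι → X) (rad : ι → ℝ),
        (∀ i, ctr i ∈ X₀) → (∀ i, s ≤ rad i) →
        (Pairwise fun i j => Disjoint (closedBall (ctr i) (rad i)) (closedBall (ctr j) (rad j))) →
        ∀ δ : ℝ, δ ∈ Set.Ioo 0 (ε / (4 * q)) →
          ENNReal.ofReal (1 - ε) * μ (⋃ i, closedBall (ctr i) ((1 + δ) * rad i))
            ≤ μ (⋃ i, closedBall (ctr i) (rad i)) := by
  refine ⟨1/2, ⟨by norm_num, by norm_num⟩, ?_⟩
  rintro ε ⟨hε0, hε2⟩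
  by_cases hne : X₀.Nonempty
  · obtain ⟨x₀, hx₀⟩ := hne
    obtain ⟨D₀, hD₀⟩ := hX₀.subset_closedBall x₀
    set D := max D₀ 0 with hDdef
    have hD : 0 ≤ D := le_max_right _ _
    have hDsub : X₀ ⊆ closedBall x₀ D :=
      hD₀.trans (closedBall_subset_closedBall (le_max_left _ _))
    have hev : ∀ᶠ t in atTop,
        (μ (closedBall x₀ t)).toReal / (c * t ^ q) ∈ Set.Icc (1-ε/8) (1+ε/8) :=
      (hgrowth x₀).eventually_mem (Icc_mem_nhds (by linarith) (by linarith))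
    obtain ⟨T₀, hT₀⟩ := eventually_atTop.mp hev
    set T := max T₀ 1 with hTdef
    have hT1 : (1:ℝ) ≤ T := le_max_right _ _
    have hlow : ∀ t, T ≤ t → (1 - ε/8) * (c * t ^ q) ≤ (μ (closedBall x₀ t)).toReal := by
      intro t ht
      have htpos : (0:ℝ) < t := by linarith
      have hctq : (0:ℝ) < c * t ^ q := by positivity
      have h := (hT₀ t (le_trans (le_max_left _ _) ht)).1
      rw [le_div_iff₀ hctq] at h
      linarith
    have hup : ∀ t, T ≤ t → (μ (closedBall x₀ t)).toReal ≤ (1 + ε/8) * (c * t ^ q) := by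
      intro t ht
      have htpos : (0:ℝ) < t := by linarith
      have hctq : (0:ℝ) < c * t ^ q := by positivity
      have h := (hT₀ t (le_trans (le_max_left _ _) ht)).2
      rw [div_le_iff₀ hctq] at h
      linarith
    refine ⟨max (T + D) (16*q*D/ε + D + 1), ?_⟩
    intro ι hcnt ctr rad hctr hrad hdisj δ hδmem
    obtain ⟨hδ0, hδlt⟩ := hδmem
    haveI := hcnt
    have key : ∀ i, ENNReal.ofReal (1-ε) * μ (closedBall (ctr i) ((1+δ) * rad i))
        ≤ μ (closedBall (ctr i) (rad i)) := by
      intro i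
      exact ball_est μ c q ε δ D T x₀ (ctr i) (rad i) hc hq hε0 hε2 hδ0 hδlt hD
        (hDsub (hctr i)) hT1 hlow hup (fun y t ht => (hpos y t ht).2)
        (le_trans (le_max_left _ _) (hrad i)) (le_trans (le_max_right _ _) (hrad i))
    calc ENNReal.ofReal (1-ε) * μ (⋃ i, closedBall (ctr i) ((1+δ) * rad i))
        ≤ ENNReal.ofReal (1-ε) * ∑' i, μ (closedBall (ctr i) ((1+δ) * rad i)) :=
          mul_le_mul_right (measure_iUnion_le _) _
      _ = ∑' i, ENNReal.ofReal (1-ε) * μ (closedBall (ctr i) ((1+δ) * rad i)) :=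
          ENNReal.tsum_mul_left.symm
      _ ≤ ∑' i, μ (closedBall (ctr i) (rad i)) := ENNReal.tsum_le_tsum key
      _ = μ (⋃ i, closedBall (ctr i) (rad i)) :=
          (measure_iUnion hdisj fun i => measurableSet_closedBall).symm
  · refine ⟨0, ?_⟩
    intro ι hcnt ctr rad hctr hrad hdisj δ hδmem
    haveI : IsEmpty ι := ⟨fun i => hne ⟨ctr i, hctr i⟩⟩
    simp
end

section
/- Let (X,d,μ) be a metric measure space of exact polynomial volume growth of degree q > 0 and let X₀ ⊆ X be a bounded set. There exists s* = s*(X₀) such that for every ball B(x,r) with center x ∈ X₀ and radius r ≥ s*, there exist points y₁, y₂ ∈ B(x,r) with d(y₁,y₂) > 2r/3. -/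
open Metric MeasureTheory Filter

theorem stmt5 {X : Type*} [MetricSpace X] [MeasurableSpace X] [BorelSpace X] (μ : Measure X)
    (c q : ℝ) (hc : 0 < c) (hq : 0 < q)
    (hpos : ∀ (x : X) (r : ℝ), 0 < r → 0 < μ (closedBall x r) ∧ μ (closedBall x r) < ⊤)
    (hgrowth : ∀ x : X, Tendsto (fun t : ℝ => (μ (closedBall x t)).toReal / (c * t ^ q))
      atTop (nhds 1))
    (X₀ : Set X) (hX₀ : Bornology.IsBounded X₀) :
    ∃ s : ℝ, ∀ (x : X) (r : ℝ), x ∈ X₀ → s ≤ r →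
      ∃ y₁ ∈ closedBall x r, ∃ y₂ ∈ closedBall x r, 2 * r / 3 < dist y₁ y₂ := by
  rcases X₀.eq_empty_or_nonempty with hemp | ⟨x₀, hx₀⟩
  · exact ⟨0, fun x r hx _ => absurd hx (by simp [hemp])⟩
  obtain ⟨D₀, hD₀⟩ := hX₀.subset_closedBall x₀
  set D : ℝ := max D₀ 0 with hDdef
  have hD0 : 0 ≤ D := le_max_right _ _
  have hD : ∀ y ∈ X₀, dist y x₀ ≤ D := fun y hy =>
    le_trans (mem_closedBall.mp (hD₀ hy)) (le_max_left _ _)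
  set K : ℝ := (3 / 2 : ℝ) ^ q with hKdef
  have hK : 1 < K := Real.one_lt_rpow_iff_of_pos (by norm_num) |>.mpr (Or.inl ⟨by norm_num, hq⟩)
  set m : ℝ := (1 + K) / 2 with hmdef
  have hm1 : 1 < m := by simp only [hmdef]; linarith
  have hmK : m < K := by simp only [hmdef]; linarith
  -- limits
  have ht₁ : Tendsto (fun r : ℝ => r - D) atTop atTop := tendsto_atTop_add_const_right atTop (-D) tendsto_id
  have ht₂ : Tendsto (fun r : ℝ => 2 * r / 3 + D) atTop atTop := by
    apply tendsto_atTop_add_const_right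
    exact Tendsto.atTop_div_const (by norm_num) (Tendsto.const_mul_atTop (by norm_num) tendsto_id)
  have h1 : Tendsto (fun r : ℝ => (μ (closedBall x₀ (r - D))).toReal / (c * (r - D) ^ q))
      atTop (nhds 1) := (hgrowth x₀).comp ht₁
  have h2 : Tendsto (fun r : ℝ =>
      (μ (closedBall x₀ (2 * r / 3 + D))).toReal / (c * (2 * r / 3 + D) ^ q))
      atTop (nhds 1) := (hgrowth x₀).comp ht₂
  have hratio : Tendsto (fun r : ℝ => (r - D) / (2 * r / 3 + D)) atTop (nhds (3 / 2)) := by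
    have hdiv : Tendsto (fun r : ℝ => D / r) atTop (nhds 0) :=
      Tendsto.div_atTop (tendsto_const_nhds (x := D)) tendsto_id
    have tnum : Tendsto (fun r : ℝ => 1 - D / r) atTop (nhds 1) := by
      have := (tendsto_const_nhds (x := (1:ℝ)) (f := atTop)).sub hdiv
      simpa using this
    have tden : Tendsto (fun r : ℝ => 2 / 3 + D / r) atTop (nhds (2 / 3)) := by
      have := (tendsto_const_nhds (x := (2/3:ℝ)) (f := atTop)).add hdiv
      simpa using this
    have := tnum.div tden (by norm_num)
    have heq : (fun r : ℝ => (1 - D / r) / (2 / 3 + D / r)) =ᶠ[atTop]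
        (fun r : ℝ => (r - D) / (2 * r / 3 + D)) := by
      filter_upwards [eventually_gt_atTop 0] with r hr
      have hr' : r ≠ 0 := ne_of_gt hr
      field_simp
    have hlim : (1 : ℝ) / (2 / 3) = 3 / 2 := by norm_num
    rw [hlim] at this
    exact this.congr' heq
  have hrpow : Tendsto (fun r : ℝ => ((r - D) / (2 * r / 3 + D)) ^ q) atTop (nhds K) :=
    hratio.rpow tendsto_const_nhds (Or.inl (by norm_num))
  -- eventual inequalities
  have ev1 : ∀ᶠ r : ℝ in atTop,
      2 / (m + 1) < (μ (closedBall x₀ (r - D))).toReal / (c * (r - D) ^ q) :=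
    h1.eventually (eventually_gt_nhds (by rw [div_lt_one (by linarith)]; linarith))
  have ev2 : ∀ᶠ r : ℝ in atTop,
      (μ (closedBall x₀ (2 * r / 3 + D))).toReal / (c * (2 * r / 3 + D) ^ q) < 2 * m / (m + 1) :=
    h2.eventually (eventually_lt_nhds (by rw [lt_div_iff₀ (by linarith)]; linarith))
  have ev3 : ∀ᶠ r : ℝ in atTop, m < ((r - D) / (2 * r / 3 + D)) ^ q :=
    hrpow.eventually (eventually_gt_nhds hmK)
  have ev4 : ∀ᶠ r : ℝ in atTop, 3 * D + 3 ≤ r := eventually_ge_atTop _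
  obtain ⟨s, hs⟩ := (((ev1.and ev2).and ev3).and ev4).exists_forall_of_atTop
  refine ⟨s, fun x r hx hsr => ?_⟩
  obtain ⟨⟨⟨hr1, hr2⟩, hr3⟩, hr4⟩ := hs r hsr
  have hr0 : 0 < r := by linarith
  have ht₁pos : 0 < r - D := by linarith
  have ht₂pos : 0 < 2 * r / 3 + D := by linarith
  by_contra hcon
  push_neg at hcon
  -- all points of B(x,r) are within 2r/3 of each other
  have hsub : μ (closedBall x₀ (r - D)) ≤ μ (closedBall x₀ (2 * r / 3 + D)) := by
    apply measure_mono
    intro y hy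
    have hyx₀ : dist y x₀ ≤ r - D := mem_closedBall.mp hy
    have hxx₀ : dist x x₀ ≤ D := hD x hx
    have hyx : dist y x ≤ r := by
      calc dist y x ≤ dist y x₀ + dist x₀ x := dist_triangle _ _ _
        _ = dist y x₀ + dist x x₀ := by rw [dist_comm x₀ x]
        _ ≤ (r - D) + D := by linarith
        _ = r := by ring
    have hyx' : dist y x ≤ 2 * r / 3 :=
      hcon y (mem_closedBall.mpr hyx) x (mem_closedBall_self hr0.le)
    have : dist y x₀ ≤ 2 * r / 3 + D := by
      calc dist y x₀ ≤ dist y x + dist x x₀ := dist_triangle _ _ _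
        _ ≤ 2 * r / 3 + D := by linarith
    exact mem_closedBall.mpr this
  have hfin₁ := (hpos x₀ (r - D) ht₁pos).2.ne
  have hfin₂ := (hpos x₀ (2 * r / 3 + D) ht₂pos).2.ne
  have hFle : (μ (closedBall x₀ (r - D))).toReal ≤
      (μ (closedBall x₀ (2 * r / 3 + D))).toReal :=
    (ENNReal.toReal_le_toReal hfin₁ hfin₂).mpr hsub
  -- contradiction via the growth estimates
  have hp₁ : (0 : ℝ) < c * (r - D) ^ q := mul_pos hc (Real.rpow_pos_of_pos ht₁pos q)
  have hp₂ : (0 : ℝ) < c * (2 * r / 3 + D) ^ q := mul_pos hc (Real.rpow_pos_of_pos ht₂pos q)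
  have hF₁ : 2 / (m + 1) * (c * (r - D) ^ q) < (μ (closedBall x₀ (r - D))).toReal :=
    (lt_div_iff₀ hp₁).mp hr1
  have hF₂ : (μ (closedBall x₀ (2 * r / 3 + D))).toReal < 2 * m / (m + 1) * (c * (2 * r / 3 + D) ^ q) :=
    (div_lt_iff₀ hp₂).mp hr2
  have hmid : m * (2 * r / 3 + D) ^ q < (r - D) ^ q := by
    have hdr : ((r - D) / (2 * r / 3 + D)) ^ q = (r - D) ^ q / (2 * r / 3 + D) ^ q :=
      Real.div_rpow ht₁pos.le ht₂pos.le q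
    rw [hdr] at hr3
    exact (lt_div_iff₀ (Real.rpow_pos_of_pos ht₂pos q)).mp hr3
  have hm1' : (0:ℝ) < m + 1 := by linarith
  have : 2 * m / (m + 1) * (c * (2 * r / 3 + D) ^ q) ≤ 2 / (m + 1) * (c * (r - D) ^ q) := by
    rw [div_mul_eq_mul_div, div_mul_eq_mul_div, div_le_div_iff₀ hm1' hm1']
    have : 2 * (c * (m * (2 * r / 3 + D) ^ q)) ≤ 2 * (c * (r - D) ^ q) := by
      have := mul_le_mul_of_nonneg_left hmid.le hc.le
      linarith
    nlinarith [this]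
  linarith
end

section
/- Let (X,d,μ) be a metric measure space of exact polynomial volume growth of degree q and X₀ ⊆ X a bounded set. Then there exists s' = s'(X₀) > 0 such that: if 𝒞 is a finite collection of closed balls whose centers all lie in X₀ and whose radii are all ≥ s', then there exists a pairwise disjoint subcollection 𝒞₀ ⊆ 𝒞 with μ(⋃_{V∈𝒞₀} V) ≥ 3^{−(q+1)} μ(⋃_{V∈𝒞} V). -/
open Metric MeasureTheory Filter

theorem stmt8 {X : Type*} [MetricSpace X] [MeasurableSpace X] [BorelSpace X] (μ : Measure X)
    (c q : ℝ) (hc : 0 < c) (hq : 0 ≤ q)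
    (hpos : ∀ (x : X) (r : ℝ), 0 < r → 0 < μ (closedBall x r) ∧ μ (closedBall x r) < ⊤)
    (hgrowth : ∀ x : X, Tendsto (fun t : ℝ => (μ (closedBall x t)).toReal / (c * t ^ q))
      atTop (nhds 1))
    (X₀ : Set X) (hX₀ : Bornology.IsBounded X₀) :
    ∃ s' : ℝ, 0 < s' ∧
      ∀ (ι : Type) (s : Finset ι) (ctr : ι → X) (rad : ι → ℝ),
        (∀ i ∈ s, ctr i ∈ X₀) → (∀ i ∈ s, s' ≤ rad i) →
        ∃ t ⊆ s, ((t : Set ι).Pairwise fun i j =>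
            Disjoint (closedBall (ctr i) (rad i)) (closedBall (ctr j) (rad j))) ∧
          ENNReal.ofReal ((3:ℝ) ^ (-(q+1))) * μ (⋃ i ∈ s, closedBall (ctr i) (rad i))
            ≤ μ (⋃ i ∈ t, closedBall (ctr i) (rad i)) := by
  -- the enlargement factor
  set τ : ℝ := 3 * (3:ℝ) ^ ((1:ℝ)/(q+1)) with hτdef
  have h3pos : (0:ℝ) < 3 ^ ((1:ℝ)/(q+1)) := Real.rpow_pos_of_pos (by norm_num) _
  have hτ3 : (3:ℝ) < τ := by
    have h1 : (1:ℝ) < 3 ^ ((1:ℝ)/(q+1)) :=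
      Real.one_lt_rpow_iff_of_pos (by norm_num) |>.2 (Or.inl ⟨by norm_num, by positivity⟩)
    rw [hτdef]; nlinarith
  have hτpos : (0:ℝ) < τ := by linarith
  have hτq : τ ^ q < 3 ^ (q+1) := by
    rw [hτdef, Real.mul_rpow (by norm_num) h3pos.le, ← Real.rpow_mul (by norm_num),
      ← Real.rpow_add (by norm_num : (0:ℝ) < 3)]
    apply Real.rpow_lt_rpow_of_exponent_lt (by norm_num)
    have hq1 : (0:ℝ) < q + 1 := by linarith
    have : (1/(q+1))*q < 1 := by
      rw [div_mul_eq_mul_div, div_lt_one hq1]; linarith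
    linarith
  have hKpos : (0:ℝ) < 3 ^ (q+1) := Real.rpow_pos_of_pos (by norm_num) _
  -- reduce to the key doubling estimate on X₀
  rcases X₀.eq_empty_or_nonempty with hXe | ⟨x₀, hx₀⟩
  · -- X₀ empty: everything vacuous
    refine ⟨1, one_pos, fun ι s ctr rad hctr _ => ?_⟩
    have hs : s = ∅ := by
      rcases Finset.eq_empty_or_nonempty s with h | ⟨i, hi⟩
      · exact h
      · exact absurd (hctr i hi) (by simp [hXe])
    subst hs
    exact ⟨∅, Finset.Subset.refl _, by simp, by simp⟩
  -- choose D bounding X₀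
  obtain ⟨D, hD0, hD⟩ := hX₀.subset_closedBall_lt 0 x₀
  -- the two normalized limits
  set f : ℝ → ℝ := fun r => (μ (closedBall x₀ (τ*r+D))).toReal with hfdef
  set g : ℝ → ℝ := fun r => (μ (closedBall x₀ (r-D))).toReal with hgdef
  have htend1 : Tendsto (fun r : ℝ => τ*r+D) atTop atTop :=
    tendsto_atTop_add_const_right _ D (tendsto_id.const_mul_atTop hτpos)
  have htend2 : Tendsto (fun r : ℝ => r-D) atTop atTop :=
    tendsto_atTop_add_const_right _ (-D) tendsto_id
  have hf : Tendsto (fun r => f r / (c * (τ*r+D) ^ q)) atTop (nhds 1) :=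
    (hgrowth x₀).comp htend1
  have hg : Tendsto (fun r => g r / (c * (r-D) ^ q)) atTop (nhds 1) :=
    (hgrowth x₀).comp htend2
  -- ratio of the normalizations tends to τ^q
  have hquot : Tendsto (fun r : ℝ => (τ*r+D)/(r-D)) atTop (nhds τ) := by
    have h1 : Tendsto (fun r : ℝ => τ + (τ*D+D)/(r-D)) atTop (nhds (τ + 0)) :=
      tendsto_const_nhds.add (tendsto_const_nhds.div_atTop htend2)
    rw [add_zero] at h1
    apply h1.congr'
    filter_upwards [eventually_gt_atTop D] with r hr
    have hrD : r - D ≠ 0 := sub_ne_zero.mpr hr.ne'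
    field_simp
    ring
  have hquotq : Tendsto (fun r : ℝ => ((τ*r+D)/(r-D)) ^ q) atTop (nhds (τ ^ q)) :=
    hquot.rpow_const (Or.inl (ne_of_gt hτpos))
  have hginv : Tendsto (fun r => (c * (r-D) ^ q) / g r) atTop (nhds 1) := by
    have := (hg.inv₀ one_ne_zero)
    rw [inv_one] at this
    apply this.congr
    intro r
    rw [inv_div]
  -- f/g tends to τ^q
  have hfg : Tendsto (fun r => f r / g r) atTop (nhds (τ ^ q)) := by
    have h1 := (hf.mul hquotq).mul hginv
    rw [one_mul, mul_one] at h1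
    apply h1.congr'
    filter_upwards [eventually_gt_atTop D, eventually_gt_atTop 0] with r hrD hr0
    have hA : (0:ℝ) < (τ*r+D) ^ q := Real.rpow_pos_of_pos (by nlinarith) _
    have hB : (0:ℝ) < (r-D) ^ q := Real.rpow_pos_of_pos (by linarith) _
    have hgpos : 0 < g r := ENNReal.toReal_pos (ne_of_gt (hpos x₀ (r-D) (by linarith)).1)
      (ne_of_lt (hpos x₀ (r-D) (by linarith)).2)
    have hdiv : ((τ*r+D)/(r-D)) ^ q = (τ*r+D) ^ q / (r-D) ^ q :=
      Real.div_rpow (by nlinarith) (by linarith) _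
    rw [hdiv]
    field_simp
  -- eventually f r < 3^(q+1) * g r
  have hev : ∀ᶠ r in atTop, f r / g r < 3 ^ (q+1) := hfg.eventually_lt_const hτq
  obtain ⟨a, ha⟩ := (hev.and ((eventually_gt_atTop D).and (eventually_gt_atTop 0))).exists_forall_of_atTop
  refine ⟨max a 1, lt_max_of_lt_right one_pos, fun ι s ctr rad hctr hrad => ?_⟩
  -- key estimate
  have key : ∀ x ∈ X₀, ∀ r : ℝ, max a 1 ≤ r →
      μ (closedBall x (τ * r)) ≤ ENNReal.ofReal ((3:ℝ) ^ (q+1)) * μ (closedBall x r) := by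
    intro x hx r hr
    obtain ⟨h1, h2, h3⟩ := ha r (le_trans (le_max_left a 1) hr)
    have hgpos : 0 < g r := ENNReal.toReal_pos (ne_of_gt (hpos x₀ (r-D) (by linarith)).1)
      (ne_of_lt (hpos x₀ (r-D) (by linarith)).2)
    have hfr : f r < 3 ^ (q+1) * g r := (div_lt_iff₀ hgpos).mp h1
    have hdist : dist x x₀ ≤ D := by
      have := hD hx; rwa [mem_closedBall] at this
    have hsub1 : closedBall x (τ * r) ⊆ closedBall x₀ (τ*r+D) :=
      closedBall_subset_closedBall' (by linarith)
    have hsub2 : closedBall x₀ (r-D) ⊆ closedBall x r :=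
      closedBall_subset_closedBall' (by rw [dist_comm]; linarith)
    have hfin : μ (closedBall x₀ (τ*r+D)) ≠ ⊤ :=
      ne_of_lt (hpos x₀ (τ*r+D) (by nlinarith)).2
    calc μ (closedBall x (τ * r)) ≤ μ (closedBall x₀ (τ*r+D)) := measure_mono hsub1
      _ = ENNReal.ofReal (f r) := (ENNReal.ofReal_toReal hfin).symm
      _ ≤ ENNReal.ofReal ((3:ℝ) ^ (q+1) * g r) := ENNReal.ofReal_le_ofReal hfr.le
      _ = ENNReal.ofReal ((3:ℝ) ^ (q+1)) * ENNReal.ofReal (g r) :=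
          ENNReal.ofReal_mul hKpos.le
      _ = ENNReal.ofReal ((3:ℝ) ^ (q+1)) * μ (closedBall x₀ (r-D)) := by
          rw [ENNReal.ofReal_toReal (ne_of_lt (hpos x₀ (r-D) (by linarith)).2)]
      _ ≤ ENNReal.ofReal ((3:ℝ) ^ (q+1)) * μ (closedBall x r) := by
          exact mul_le_mul_right (measure_mono hsub2) _
  -- apply the Vitali covering lemma
  rcases Finset.eq_empty_or_nonempty s with hse | hsne
  · subst hse
    exact ⟨∅, Finset.Subset.refl _, by simp, by simp⟩
  obtain ⟨u, hu_sub, hu_disj, hu_cov⟩ :=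
    Vitali.exists_disjoint_subfamily_covering_enlargement_closedBall (↑s : Set ι) ctr rad
      (s.sup' hsne rad) (fun i hi => Finset.le_sup' rad hi) τ hτ3
  have hu_fin : u.Finite := s.finite_toSet.subset hu_sub
  set t : Finset ι := hu_fin.toFinset with htdef
  have hts : ↑t = u := hu_fin.coe_toFinset
  have ht_sub : t ⊆ s := by
    intro i hi
    have : i ∈ u := by rwa [← hts]
    exact hu_sub this
  refine ⟨t, ht_sub, ?_, ?_⟩
  · rw [hts]
    exact fun i hi j hj hij => hu_disj hi hj hij
  · -- the measure estimate
    have hrad_pos : ∀ i ∈ t, 0 < rad i := fun i hi =>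
      lt_of_lt_of_le (lt_max_of_lt_right one_pos) (hrad i (ht_sub hi))
    have step1 : μ (⋃ i ∈ s, closedBall (ctr i) (rad i)) ≤
        μ (⋃ b ∈ t, closedBall (ctr b) (τ * rad b)) := by
      apply measure_mono
      apply Set.iUnion₂_subset
      intro i hi
      obtain ⟨b, hb, hsub⟩ := hu_cov i hi
      have hbt : b ∈ t := by rw [← Finset.mem_coe, hts]; exact hb
      refine hsub.trans ?_
      exact Set.subset_iUnion₂ (s := fun i' (_ : i' ∈ t) => closedBall (ctr i') (τ * rad i')) b hbt
    have step2 : μ (⋃ b ∈ t, closedBall (ctr b) (τ * rad b)) ≤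
        ∑ b ∈ t, μ (closedBall (ctr b) (τ * rad b)) := measure_biUnion_finset_le _ _
    have step3 : ∑ b ∈ t, μ (closedBall (ctr b) (τ * rad b)) ≤
        ∑ b ∈ t, ENNReal.ofReal ((3:ℝ) ^ (q+1)) * μ (closedBall (ctr b) (rad b)) := by
      apply Finset.sum_le_sum
      intro b hb
      exact key (ctr b) (hctr b (ht_sub hb)) (rad b) (hrad b (ht_sub hb))
    have step4 : ∑ b ∈ t, ENNReal.ofReal ((3:ℝ) ^ (q+1)) * μ (closedBall (ctr b) (rad b)) =
        ENNReal.ofReal ((3:ℝ) ^ (q+1)) * μ (⋃ b ∈ t, closedBall (ctr b) (rad b)) := by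
      rw [← Finset.mul_sum]
      congr 1
      rw [measure_biUnion_finset ?_ (fun b _ => measurableSet_closedBall)]
      · rw [hts]; exact hu_disj
    have hmain : μ (⋃ i ∈ s, closedBall (ctr i) (rad i)) ≤
        ENNReal.ofReal ((3:ℝ) ^ (q+1)) * μ (⋃ b ∈ t, closedBall (ctr b) (rad b)) :=
      (step1.trans step2).trans (step3.trans_eq step4)
    have hone : ENNReal.ofReal ((3:ℝ) ^ (-(q+1))) * ENNReal.ofReal ((3:ℝ) ^ (q+1)) = 1 := by
      rw [← ENNReal.ofReal_mul (Real.rpow_pos_of_pos (by norm_num) _).le,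
        ← Real.rpow_add (by norm_num : (0:ℝ) < 3)]
      have h0 : -(q+1)+(q+1) = 0 := by ring
      rw [h0, Real.rpow_zero, ENNReal.ofReal_one]
    calc ENNReal.ofReal ((3:ℝ) ^ (-(q+1))) * μ (⋃ i ∈ s, closedBall (ctr i) (rad i))
        ≤ ENNReal.ofReal ((3:ℝ) ^ (-(q+1))) *
          (ENNReal.ofReal ((3:ℝ) ^ (q+1)) * μ (⋃ b ∈ t, closedBall (ctr b) (rad b))) :=
          mul_le_mul_right hmain _
      _ = (ENNReal.ofReal ((3:ℝ) ^ (-(q+1))) * ENNReal.ofReal ((3:ℝ) ^ (q+1))) *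
          μ (⋃ b ∈ t, closedBall (ctr b) (rad b)) := by rw [mul_assoc]
      _ = μ (⋃ b ∈ t, closedBall (ctr b) (rad b)) := by rw [hone, one_mul]
end

section
/- Let X be a metric space and ε ∈ (0,1). Suppose 𝒰 is a (1 + 4/ε)-expanding tower of closed balls over a subset W ⊆ X of height n > 1. Then for all indices 1 ≤ i < j ≤ n and all balls U ∈ 𝒰ᵢ and V ∈ [𝒰ⱼ] (the maximal balls of level j with respect to set inclusion): if U ∩ V ≠ ∅ then U ⊆ V^ε. -/
open Metric

/-- Lemma on maximal balls in an expanding tower. A tower over `W` of height `n` is a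
finite collection of closed balls `U i x = closedBall (center x i) (radius x i)`,
`1 ≤ i ≤ n`, with `x ∈ U i x` and `U i x ⊆ U (i+1) x`. It is `δ`-expanding if the
`δ`-expansion of `U i x` is contained in `U (i+1) x`. -/
theorem stmt9 {X : Type*} [MetricSpace X] (W : Set X) (n : ℕ) (hn : 1 < n)
    (ε : ℝ) (hε : ε ∈ Set.Ioo (0:ℝ) 1)
    (center : X → ℕ → X) (radius : X → ℕ → ℝ)
    (hmem : ∀ x ∈ W, ∀ i, 1 ≤ i → i ≤ n → x ∈ closedBall (center x i) (radius x i))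
    -- the tower is (1 + 4/ε)-expanding:
    (hexp : ∀ x ∈ W, ∀ i, 1 ≤ i → i < n →
      closedBall (center x i) ((1 + (1 + 4 / ε)) * radius x i)
        ⊆ closedBall (center x (i+1)) (radius x (i+1)))
    (hfin : Set.Finite {p : X × ℝ | ∃ x ∈ W, ∃ i, 1 ≤ i ∧ i ≤ n ∧
      p = (center x i, radius x i)})
    (i j : ℕ) (h1i : 1 ≤ i) (hij : i < j) (hjn : j ≤ n)
    (xU yV : X) (hxU : xU ∈ W) (hyV : yV ∈ W)
    -- the ball `V = closedBall (center yV j) (radius yV j)` is maximal in level j: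
    (hmax : ∀ z ∈ W, closedBall (center yV j) (radius yV j)
        ⊆ closedBall (center z j) (radius z j) →
      closedBall (center yV j) (radius yV j) = closedBall (center z j) (radius z j))
    (hinter : (closedBall (center xU i) (radius xU i) ∩
      closedBall (center yV j) (radius yV j)).Nonempty) :
    closedBall (center xU i) (radius xU i)
      ⊆ closedBall (center yV j) ((1 + ε) * radius yV j) := by
  obtain ⟨p, hpU, hpV⟩ := hinter
  obtain ⟨hε0, hε1⟩ := hε
  have h4 : 0 ≤ 4 / ε := by positivity
  have hrU0 : 0 ≤ radius xU i := nonempty_closedBall.mp ⟨p, hpU⟩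
  have hR0 : 0 ≤ radius yV j := nonempty_closedBall.mp ⟨p, hpV⟩
  -- chain containment lemma
  have chain : ∀ x ∈ W, ∀ a b : ℕ, 1 ≤ a → a ≤ b → b ≤ n →
      (closedBall (center x a) (radius x a)).Nonempty →
      closedBall (center x a) (radius x a) ⊆ closedBall (center x b) (radius x b) := by
    intro x hx a b ha hab hbn hne
    induction b with
    | zero => omega
    | succ b ih =>
      rcases eq_or_lt_of_le hab with rfl | h
      · exact subset_rfl
      · have hab' : a ≤ b := by omega
        have hsub := ih hab' (by omega)
        have hrb : 0 ≤ radius x b :=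
          nonempty_closedBall.mp (hne.mono hsub)
        calc closedBall (center x a) (radius x a)
            ⊆ closedBall (center x b) (radius x b) := hsub
          _ ⊆ closedBall (center x b) ((1 + (1 + 4 / ε)) * radius x b) :=
              closedBall_subset_closedBall (by nlinarith [mul_nonneg h4 hrb])
          _ ⊆ _ := hexp x hx b (by omega) (by omega)
  rcases le_or_gt (radius xU i) (ε / 2 * radius yV j) with hcase | hcase
  · -- small radius: direct triangle inequality
    intro z hz
    rw [mem_closedBall] at *
    have ht := dist_triangle4 z (center xU i) p (center yV j)
    have h1 : dist (center xU i) p ≤ radius xU i := by rw [dist_comm]; exact hpU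
    nlinarith [hz, hpV, ht]
  · -- big radius: V is contained in the expansion of U, hence in Uⱼ(xU), so V = Uⱼ(xU)
    have h1 : ε * radius yV j < 2 * radius xU i := by linarith
    have h2R : 2 * radius yV j ≤ 4 * radius xU i / ε := by
      rw [le_div_iff₀ hε0]; nlinarith
    have h2R' : 2 * radius yV j ≤ 4 / ε * radius xU i := by
      have : 4 * radius xU i / ε = 4 / ε * radius xU i := by ring
      linarith [h2R, this.le]
    have hVexp : closedBall (center yV j) (radius yV j)
        ⊆ closedBall (center xU i) ((1 + (1 + 4 / ε)) * radius xU i) := by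
      intro z hz
      rw [mem_closedBall] at *
      have ht := dist_triangle4 z (center yV j) p (center xU i)
      have hcp : dist (center yV j) p ≤ radius yV j := by rw [dist_comm]; exact hpV
      nlinarith [hz, hpU, ht]
    have hVsub : closedBall (center yV j) (radius yV j)
        ⊆ closedBall (center xU j) (radius xU j) := by
      have hstep := hexp xU hxU i h1i (by omega)
      have hVi1 : closedBall (center yV j) (radius yV j)
          ⊆ closedBall (center xU (i+1)) (radius xU (i+1)) := hVexp.trans hstep
      exact hVi1.trans (chain xU hxU (i+1) j (by omega) (by omega) hjn
        (⟨p, hVi1 hpV⟩))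
    have heq := hmax xU hxU hVsub
    have hUsub : closedBall (center xU i) (radius xU i)
        ⊆ closedBall (center yV j) (radius yV j) := by
      rw [heq]
      exact chain xU hxU i j h1i (by omega) hjn ⟨p, hpU⟩
    exact hUsub.trans (closedBall_subset_closedBall (by nlinarith))
end

section
/- (Tower sandwich) Let (X,d,μ) be a metric measure space of exact polynomial growth of degree q > 0, X₀ ⊆ X bounded, C := 3^{q+1}/(3^{q+1}−1), Δ := max(144q,4), K := ⌈2 log_C(16/ε)⌉. For all sufficiently small ε > 0 there exists s₁ = s₁(X₀,ε) such that for every integer L ≥ 2 log_C(4/ε) the following holds. Let 𝒰, 𝒱 be centered towers over X₀ of height L+1, with all centers in X₀ and all radii ≥ s₁, satisfying U₁(x) ⊆ V₁(x) ⊆ U₂(x) ⊆ V₂(x) ⊆ … ⊆ U_{L+1}(x) ⊆ V_{L+1}(x) and Uᵢ(x)^{(1+Δ/ε)} ⊆ Vᵢ(x) for all x ∈ X₀ and all i. If no ball V ∈ 𝒱 can be 4ε-filled by a pairwise disjoint subcollection of 𝒰, then μ(⋃_{U∈𝒰₁} U) ≤ (1 + ε/3^{q+1})^{−⌊L/K⌋}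 μ(⋃_{V∈𝒱_{L+1}} V). -/
open Metric MeasureTheory Filter

/-- A ball `closedBall y s` is `δ`-filled by a pairwise disjoint subcollection of the
centered tower with radii `u` (over `X₀`, levels `1,…,L+1`). -/
def CanBeFilled {X : Type*} [MetricSpace X] [MeasurableSpace X] (μ : Measure X)
    (X₀ : Set X) (u : X → ℕ → ℝ) (L : ℕ) (δ : ℝ) (y : X) (s : ℝ) : Prop :=
  ∃ F : Set (X × ℕ), F ⊆ {p : X × ℕ | p.1 ∈ X₀ ∧ 1 ≤ p.2 ∧ p.2 ≤ L + 1} ∧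
    (F.Pairwise fun p p' =>
      Disjoint (closedBall p.1 (u p.1 p.2)) (closedBall p'.1 (u p'.1 p'.2))) ∧
    (∀ p ∈ F, closedBall p.1 (u p.1 p.2) ⊆ closedBall y s) ∧
    μ (closedBall y s \ ⋃ p ∈ F, closedBall p.1 (u p.1 p.2))
      < ENNReal.ofReal δ * μ (closedBall y s)

set_option maxHeartbeats 4000000 in
/-- Tower sandwich theorem: if no ball of `𝒱` can be `4ε`-filled by a disjoint
subcollection of `𝒰`, then `μ(⋃𝒰₁) ≤ (1+ε/3^{q+1})^{-⌊L/K⌋} μ(⋃𝒱_{L+1})`,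
stated multiplicatively, with `K = ⌈2 log_C (16/ε)⌉` and `C = 3^{q+1}/(3^{q+1}-1)`. -/
theorem stmt12 {X : Type*} [MetricSpace X] [MeasurableSpace X] [BorelSpace X] (μ : Measure X)
    (c q : ℝ) (hc : 0 < c) (hq : 0 < q)
    (hpos : ∀ (x : X) (r : ℝ), 0 < r → 0 < μ (closedBall x r) ∧ μ (closedBall x r) < ⊤)
    (hgrowth : ∀ x : X, Tendsto (fun t : ℝ => (μ (closedBall x t)).toReal / (c * t ^ q))
      atTop (nhds 1))
    (X₀ : Set X) (hX₀ : Bornology.IsBounded X₀) :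
    ∃ ε₀ > (0:ℝ), ∀ ε ∈ Set.Ioo (0:ℝ) ε₀, ∃ s₁ : ℝ,
      ∀ (L : ℕ) (u v : X → ℕ → ℝ),
        (2 * Real.logb ((3:ℝ) ^ (q+1) / ((3:ℝ) ^ (q+1) - 1)) (4 / ε) ≤ (L : ℝ)) →
        -- centered towers of height L+1 over X₀, with nonnegative radii:
        (∀ x ∈ X₀, ∀ i, 1 ≤ i → i ≤ L + 1 → 0 ≤ u x i) →
        (∀ x ∈ X₀, ∀ i, 1 ≤ i → i ≤ L + 1 → 0 ≤ v x i) →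
        -- interleaving U₁(x) ⊆ V₁(x) ⊆ U₂(x) ⊆ … ⊆ U_{L+1}(x) ⊆ V_{L+1}(x):
        (∀ x ∈ X₀, ∀ i, 1 ≤ i → i ≤ L + 1 →
          closedBall x (u x i) ⊆ closedBall x (v x i)) →
        (∀ x ∈ X₀, ∀ i, 1 ≤ i → i ≤ L →
          closedBall x (v x i) ⊆ closedBall x (u x (i+1))) →
        -- the (1+Δ/ε)-expansion of Uᵢ(x) is contained in Vᵢ(x), Δ = max (144 q) 4:
        (∀ x ∈ X₀, ∀ i, 1 ≤ i → i ≤ L + 1 →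
          closedBall x ((1 + (1 + max (144 * q) 4 / ε)) * u x i) ⊆ closedBall x (v x i)) →
        -- all radii at least s₁:
        (∀ x ∈ X₀, ∀ i, 1 ≤ i → i ≤ L + 1 → s₁ ≤ u x i ∧ s₁ ≤ v x i) →
        -- the towers are finite collections of balls:
        Set.Finite {p : X × ℝ | ∃ x ∈ X₀, ∃ i, 1 ≤ i ∧ i ≤ L + 1 ∧ p = (x, u x i)} →
        Set.Finite {p : X × ℝ | ∃ x ∈ X₀, ∃ i, 1 ≤ i ∧ i ≤ L + 1 ∧ p = (x, v x i)} →
        -- no ball of 𝒱 can be 4ε-filled by a disjoint subcollection of 𝒰: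
        (¬ ∃ y ∈ X₀, ∃ i, 1 ≤ i ∧ i ≤ L + 1 ∧
          CanBeFilled μ X₀ u L (4 * ε) y (v y i)) →
        ENNReal.ofReal ((1 + ε / (3:ℝ) ^ (q+1)) ^
            (L / Nat.ceil (2 * Real.logb ((3:ℝ) ^ (q+1) / ((3:ℝ) ^ (q+1) - 1)) (16 / ε))))
          * μ (⋃ x ∈ X₀, closedBall x (u x 1))
          ≤ μ (⋃ x ∈ X₀, closedBall x (v x (L+1))) := by
  rcases X₀.eq_empty_or_nonempty with hX₀e | ⟨x₀, hx₀⟩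
  · -- X₀ empty: both unions are empty
    refine ⟨1, one_pos, fun ε _ => ⟨0, fun L u v _ _ _ _ _ _ _ _ _ _ => ?_⟩⟩
    subst hX₀e
    simp
  -- bounded set: a bound D for the distance to x₀
  obtain ⟨R₀, hR₀⟩ := hX₀.subset_closedBall x₀
  set D : ℝ := max R₀ 0 with hDdef
  have hD : ∀ x ∈ X₀, dist x x₀ ≤ D := fun x hx => le_trans (hR₀ hx) (le_max_left _ _)
  have hD0 : 0 ≤ D := le_max_right _ _
  -- the multiplicative tolerance
  set k : ℝ := (4/3 : ℝ) ^ q with hkdef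
  have hk1 : 1 < k := by
    rw [hkdef, Real.one_lt_rpow_iff_of_pos (by norm_num)]
    exact Or.inl ⟨by norm_num, hq⟩
  set η : ℝ := min (1/3) ((k-1)/(k+1)) with hηdef
  have hη0 : 0 < η := lt_min (by norm_num) (div_pos (by linarith) (by linarith))
  have hη3 : η ≤ 1/3 := min_le_left _ _
  have hηk : 1 + η ≤ k * (1 - η) := by
    have h1 : η ≤ (k-1)/(k+1) := min_le_right _ _
    have h2 : η * (k+1) ≤ k - 1 := by
      rw [div_eq_mul_inv] at h1
      have hk10 : (0:ℝ) < k + 1 := by linarith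
      have := mul_le_mul_of_nonneg_right h1 hk10.le
      rw [mul_assoc, inv_mul_cancel₀ hk10.ne', mul_one] at this
      exact this
    nlinarith
  -- growth threshold at x₀
  have h1 := (hgrowth x₀).eventually (Metric.closedBall_mem_nhds (1:ℝ) hη0)
  obtain ⟨T₀, hT₀⟩ := (Filter.eventually_atTop).mp h1
  set T : ℝ := max T₀ 1 with hTdef
  have hT1 : (1:ℝ) ≤ T := le_max_right _ _
  have hest : ∀ t : ℝ, T ≤ t →
      (1-η)*(c*t^q) ≤ (μ (closedBall x₀ t)).toReal ∧
      (μ (closedBall x₀ t)).toReal ≤ (1+η)*(c*t^q) := by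
    intro t ht
    have ht0 : (0:ℝ) < t := lt_of_lt_of_le one_pos (le_trans hT1 ht)
    have hct : (0:ℝ) < c * t ^ q := mul_pos hc (Real.rpow_pos_of_pos ht0 q)
    have h := hT₀ t (le_trans (le_max_left _ _) ht)
    rw [Real.dist_eq, abs_le] at h
    constructor
    · have hf1 : 1 - η ≤ (μ (closedBall x₀ t)).toReal / (c*t^q) := by linarith only [h.1]
      rw [le_div_iff₀ hct] at hf1
      linarith only [hf1]
    · have hf2 : (μ (closedBall x₀ t)).toReal / (c*t^q) ≤ 1 + η := by linarith only [h.2]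
      rw [div_le_iff₀ hct] at hf2
      linarith only [hf2]
  -- key radius-comparison lemma
  have key : ∀ x ∈ X₀, ∀ r r' : ℝ, T ≤ r - D → T ≤ r' →
      closedBall x r ⊆ closedBall x r' → 3 * (r - D) ≤ 4 * (r' + D) := by
    intro x hx r r' hr hr' hsub
    have h1 : closedBall x₀ (r - D) ⊆ closedBall x r := by
      intro y hy
      rw [Metric.mem_closedBall] at *
      have := hD x hx
      calc dist y x ≤ dist y x₀ + dist x₀ x := dist_triangle _ _ _
        _ ≤ (r - D) + D := by rw [dist_comm x₀ x]; exact add_le_add hy this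
        _ = r := by ring
    have h2 : closedBall x r' ⊆ closedBall x₀ (r' + D) := by
      intro y hy
      rw [Metric.mem_closedBall] at *
      have := hD x hx
      calc dist y x₀ ≤ dist y x + dist x x₀ := dist_triangle _ _ _
        _ ≤ r' + D := add_le_add hy this
    have hr'D : T ≤ r' + D := le_trans hr' (by linarith only [hD0])
    have hmono : μ (closedBall x₀ (r - D)) ≤ μ (closedBall x₀ (r' + D)) :=
      measure_mono (h1.trans (hsub.trans h2))
    have hfin : μ (closedBall x₀ (r' + D)) ≠ ⊤ :=
      (hpos x₀ (r' + D) (by linarith only [hr', hT1, hD0])).2.ne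
    have htR := ENNReal.toReal_mono hfin hmono
    have hA := (hest (r - D) hr).1
    have hB := (hest (r' + D) hr'D).2
    have hq1 : (1-η) * (c * (r-D)^q) ≤ (1+η) * (c * (r'+D)^q) := by
      calc (1-η) * (c * (r-D)^q) ≤ (μ (closedBall x₀ (r-D))).toReal := hA
        _ ≤ (μ (closedBall x₀ (r'+D))).toReal := htR
        _ ≤ (1+η) * (c * (r'+D)^q) := hB
    have hrpow : (r - D)^q ≤ ((4/3) * (r' + D))^q := by
      have hnn : (0:ℝ) ≤ c * (r'+D)^q :=
        le_of_lt (mul_pos hc (Real.rpow_pos_of_pos (by linarith only [hr', hT1, hD0]) q))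
      have hk' : (1+η) * (c * (r'+D)^q) ≤ k * ((1-η) * (c * (r'+D)^q)) := by
        nlinarith only [hηk, hnn]
      have h3 : (1-η) * (c * (r-D)^q) ≤ k * ((1-η) * (c * (r'+D)^q)) := le_trans hq1 hk'
      have h1η : (0:ℝ) < 1 - η := by linarith only [hη3]
      have h4 : (r-D)^q ≤ k * (r'+D)^q := by
        have h5 := mul_le_mul_of_nonneg_left h3 (le_of_lt (inv_pos.mpr (mul_pos h1η hc)))
        calc (r-D)^q = ((1-η)*c)⁻¹ * ((1-η) * (c * (r-D)^q)) := by
              field_simp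
          _ ≤ ((1-η)*c)⁻¹ * (k * ((1-η) * (c * (r'+D)^q))) := h5
          _ = k * (r'+D)^q := by
              field_simp
      rw [Real.mul_rpow (by norm_num) (by linarith only [hr', hT1, hD0] : (0:ℝ) ≤ r' + D)]
      rwa [hkdef] at h4
    by_contra hcon
    push_neg at hcon
    have hlt : (4/3) * (r' + D) < r - D := by linarith only [hcon]
    have := Real.rpow_lt_rpow (mul_nonneg (by norm_num) (by linarith only [hr', hT1, hD0])) hlt hq
    linarith only [hrpow, this]
  -- choice of ε₀
  have h4q : (0:ℝ) < (4:ℝ) ^ (1/q) := Real.rpow_pos_of_pos (by norm_num) _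
  refine ⟨min (1/3) ((4 * (4:ℝ) ^ (1/q))⁻¹), lt_min (by norm_num)
    (inv_pos.mpr (by positivity)), ?_⟩
  rintro ε ⟨hε0, hεlt⟩
  have hε13 : ε ≤ 1/3 := le_trans hεlt.le (min_le_left _ _)
  have hε1 : ε ≤ 1 := by linarith only [hε13]
  have hεA : ε ≤ (4 * (4:ℝ) ^ (1/q))⁻¹ := le_trans hεlt.le (min_le_right _ _)
  -- choice of s₁
  refine ⟨max 1 (max (2*T) (8*D)), ?_⟩
  set s₁ : ℝ := max 1 (max (2*T) (8*D)) with hs₁def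
  have hs₁1 : (1:ℝ) ≤ s₁ := le_max_left _ _
  have hs₁T : 2*T ≤ s₁ := le_trans (le_max_left _ _) (le_max_right _ _)
  have hs₁D : 8*D ≤ s₁ := le_trans (le_max_right _ _) (le_max_right _ _)
  have hT0 : (0:ℝ) < T := lt_of_lt_of_le one_pos hT1
  have hs₁0 : (0:ℝ) < s₁ := lt_of_lt_of_le one_pos hs₁1
  intro L u v hL hu0 hv0 hUV hVU hexp hrad hufin _ _
  -- L ≥ 1
  have hA1 : (1:ℝ) < (3:ℝ) ^ (q+1) := by
    rw [Real.one_lt_rpow_iff_of_pos (by norm_num)]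
    exact Or.inl ⟨by norm_num, by linarith only [hq]⟩
  have hC1 : (1:ℝ) < (3:ℝ) ^ (q+1) / ((3:ℝ) ^ (q+1) - 1) := by
    rw [one_lt_div (by linarith only [hA1])]
    linarith only []
  have hL1 : 1 ≤ L := by
    have hlogpos : 0 < Real.logb ((3:ℝ) ^ (q+1) / ((3:ℝ) ^ (q+1) - 1)) (4 / ε) := by
      apply Real.logb_pos hC1
      rw [lt_div_iff₀ hε0]
      linarith only [hε13]
    have hLpos : (0:ℝ) < (L:ℝ) := lt_of_lt_of_le (by linarith only [hlogpos]) hL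
    exact_mod_cast Nat.one_le_iff_ne_zero.mpr (by
      intro h; rw [h] at hLpos; simp at hLpos)
  -- step A: v x i ≥ 2 (u x i / ε)
  have stepA : ∀ x ∈ X₀, ∀ i, 1 ≤ i → i ≤ L + 1 → 2 * (u x i / ε) ≤ v x i := by
    intro x hx i hi1 hi2
    have hu : s₁ ≤ u x i := (hrad x hx i hi1 hi2).1
    have hv : s₁ ≤ v x i := (hrad x hx i hi1 hi2).2
    set Δ : ℝ := max (144 * q) 4 with hΔdef
    have hΔ4 : (4:ℝ) ≤ Δ := le_max_right _ _
    have hR : (1 + (1 + Δ / ε)) * u x i = (2 + Δ/ε) * u x i := by ring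
    have hsub := hexp x hx i hi1 hi2
    rw [hR] at hsub
    have hu0' : (0:ℝ) ≤ u x i := by linarith only [hu, hs₁0]
    have hΔε : (0:ℝ) ≤ Δ/ε := div_nonneg (by linarith only [hΔ4]) hε0.le
    have hexp2 : (2 + Δ/ε) * u x i = 2 * u x i + (Δ/ε) * u x i := by ring
    have hΔεu : (0:ℝ) ≤ (Δ/ε) * u x i := mul_nonneg hΔε hu0'
    have hkey := key x hx ((2 + Δ/ε) * u x i) (v x i)
      (by linarith only [hexp2, hΔεu, hu, hs₁T, hs₁D, hT0, hD0])
      (by linarith only [hv, hs₁T, hT0]) hsub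
    have hP1 : 4 * (u x i / ε) ≤ (Δ/ε) * u x i := by
      have h4u : 4 * u x i ≤ Δ * u x i := mul_le_mul_of_nonneg_right hΔ4 hu0'
      calc 4 * (u x i / ε) = (4 * u x i) / ε := by ring
        _ ≤ (Δ * u x i) / ε := (div_le_div_iff_of_pos_right hε0).mpr h4u
        _ = (Δ/ε) * u x i := by ring
    have hP2 : u x i ≤ u x i / ε := by
      rw [le_div_iff₀ hε0]
      exact mul_le_of_le_one_right hu0' hε1
    have hDu : 8 * D ≤ u x i := by linarith only [hs₁D, hu]
    have hv0' : (0:ℝ) ≤ v x i := by linarith only [hv, hs₁0]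
    linarith only [hkey, hP1, hP2, hDu, hexp2, hu0', hv0']
  -- step B: u x (i+1) ≥ v x i / 2
  have stepB : ∀ x ∈ X₀, ∀ i, 1 ≤ i → i ≤ L → v x i / 2 ≤ u x (i+1) := by
    intro x hx i hi1 hi2
    have hv : s₁ ≤ v x i := (hrad x hx i hi1 (by omega)).2
    have hu' : s₁ ≤ u x (i+1) := (hrad x hx (i+1) (by omega) (by omega)).1
    have hsub := hVU x hx i hi1 hi2
    have hkey := key x hx (v x i) (u x (i+1))
      (by linarith only [hv, hs₁T, hs₁D, hT0])
      (by linarith only [hu', hs₁T, hT0]) hsub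
    have hDv : 8 * D ≤ v x i := by linarith only [hs₁D, hv]
    linarith only [hkey, hDv, hu', hs₁0, hv]
  -- X₀ is finite
  have hfin : X₀.Finite := by
    apply Set.Finite.subset (hufin.image Prod.fst)
    intro x hx
    exact ⟨(x, u x 1), ⟨x, hx, 1, le_refl 1, by omega, rfl⟩, rfl⟩
  obtain ⟨xh, hxh, hmax⟩ := Set.exists_max_image X₀ (fun x => u x 1) hfin ⟨x₀, hx₀⟩
  set r₁ : ℝ := u xh 1 with hr₁def
  have hr₁s : s₁ ≤ r₁ := (hrad xh hxh 1 le_rfl (by omega)).1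
  have hr₁0 : (0:ℝ) < r₁ := lt_of_lt_of_le hs₁0 hr₁s
  -- chain of radii
  have chain : ∀ j : ℕ, j ≤ L → (1/ε)^j * u xh 1 ≤ u xh (j+1) := by
    intro j
    induction j with
    | zero => intro _; simp
    | succ n ih =>
      intro hn
      have h1 : (1/ε)^n * u xh 1 ≤ u xh (n+1) := ih (by omega)
      have h2 : 2 * (u xh (n+1) / ε) ≤ v xh (n+1) := stepA xh hxh (n+1) (by omega) (by omega)
      have h3 : v xh (n+1) / 2 ≤ u xh (n+1+1) := stepB xh hxh (n+1) (by omega) hn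
      have hεinv : (0:ℝ) ≤ 1/ε := by positivity
      calc (1/ε)^(n+1) * u xh 1 = (1/ε) * ((1/ε)^n * u xh 1) := by ring
        _ ≤ (1/ε) * u xh (n+1) := mul_le_mul_of_nonneg_left h1 hεinv
        _ = u xh (n+1) / ε := by ring
        _ ≤ u xh (n+2) := by linarith only [h2, h3]
  set β : ℝ := 1/ε with hβdef
  have hβ1 : (1:ℝ) ≤ β := by
    rw [hβdef, le_div_iff₀ hε0]
    linarith only [hε1]
  set vstar : ℝ := v xh (L+1) with hvstardef
  have hvstar : β^L * r₁ ≤ vstar := by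
    have h1 : β^L * r₁ ≤ u xh (L+1) := chain L le_rfl
    have h2 : 2 * (u xh (L+1) / ε) ≤ vstar := stepA xh hxh (L+1) (by omega) le_rfl
    have hus : s₁ ≤ u xh (L+1) := (hrad xh hxh (L+1) (by omega) le_rfl).1
    have hu0'' : (0:ℝ) ≤ u xh (L+1) := by linarith only [hus, hs₁0]
    have h3 : u xh (L+1) ≤ u xh (L+1) / ε := by
      rw [le_div_iff₀ hε0]
      exact mul_le_of_le_one_right hu0'' hε1
    linarith only [h1, h2, h3, hu0'']
  have hvstar_s : s₁ ≤ vstar := (hrad xh hxh (L+1) (by omega) le_rfl).2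
  -- the two comparison balls
  set ra : ℝ := r₁ + D with hradef
  set rb : ℝ := vstar - D with hrbdef
  have hraT : T ≤ ra := by
    rw [hradef]; linarith only [hr₁s, hs₁T, hT0, hD0]
  have hrbT : T ≤ rb := by
    rw [hrbdef]; linarith only [hvstar_s, hs₁T, hs₁D, hT0]
  have hU_sub : (⋃ x ∈ X₀, closedBall x (u x 1)) ⊆ closedBall x₀ ra := by
    apply Set.iUnion₂_subset
    intro x hx y hy
    rw [Metric.mem_closedBall] at *
    have hd1 := hD x hx
    have hd2 := hmax x hx
    calc dist y x₀ ≤ dist y x + dist x x₀ := dist_triangle _ _ _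
      _ ≤ u x 1 + D := add_le_add hy hd1
      _ ≤ ra := by rw [hradef]; linarith only [hd2]
  have hV_sup : closedBall x₀ rb ⊆ ⋃ x ∈ X₀, closedBall x (v x (L+1)) := by
    have h1 : closedBall x₀ rb ⊆ closedBall xh vstar := by
      intro y hy
      rw [Metric.mem_closedBall] at *
      have := hD xh hxh
      calc dist y xh ≤ dist y x₀ + dist x₀ xh := dist_triangle _ _ _
        _ ≤ rb + D := by rw [dist_comm x₀ xh]; exact add_le_add hy this
        _ = vstar := by rw [hrbdef]; ring
    refine h1.trans ?_
    rw [hvstardef]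
    exact Set.subset_biUnion_of_mem (u := fun x => closedBall x (v x (L+1))) hxh
  -- abbreviations for the main numeric inequality
  set m : ℕ := L / Nat.ceil (2 * Real.logb ((3:ℝ) ^ (q+1) / ((3:ℝ) ^ (q+1) - 1)) (16 / ε))
    with hmdef
  set P : ℝ := (1 + ε / (3:ℝ) ^ (q+1)) ^ m with hPdef
  have h3 : (1:ℝ) ≤ (3:ℝ) ^ (q+1) := le_of_lt hA1
  have hdiv0 : (0:ℝ) ≤ ε / (3:ℝ) ^ (q+1) := div_nonneg hε0.le (by linarith only [hA1])
  have hb0 : (0:ℝ) ≤ 1 + ε / (3:ℝ) ^ (q+1) := by linarith only [hdiv0]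
  have hP0 : (0:ℝ) ≤ P := pow_nonneg hb0 m
  have hP2L : P ≤ 2^L := by
    have hb : 1 + ε / (3:ℝ) ^ (q+1) ≤ 2 := by
      have hd : ε / (3:ℝ) ^ (q+1) ≤ ε := by
        rw [div_le_iff₀ (by linarith only [hA1])]
        calc ε = ε * 1 := (mul_one ε).symm
          _ ≤ ε * (3:ℝ) ^ (q+1) := mul_le_mul_of_nonneg_left h3 hε0.le
      linarith only [hd, hε1]
    calc P ≤ (2:ℝ)^m := pow_le_pow_left₀ hb0 hb m
      _ ≤ (2:ℝ)^L := pow_le_pow_right₀ one_le_two (Nat.div_le_self L _)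
  -- γ^q ≥ 4 where γ = β/4
  set γ : ℝ := β / 4 with hγdef
  have hγ0 : (0:ℝ) < γ := by
    rw [hγdef, hβdef]; positivity
  have hγ4 : (4:ℝ) ≤ γ ^ q := by
    have hγA : (4:ℝ) ^ (1/q) ≤ γ := by
      have h44 : 4 * (4:ℝ) ^ (1/q) ≤ 1/ε := by
        rw [one_div ε]
        exact (le_inv_comm₀ hε0 (by positivity)).mp hεA
      rw [hγdef, hβdef, le_div_iff₀ (by norm_num : (0:ℝ) < 4)]
      linarith only [h44]
    calc (4:ℝ) = ((4:ℝ) ^ (1/q)) ^ q := by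
          rw [one_div, Real.rpow_inv_rpow (by norm_num) hq.ne']
      _ ≤ γ ^ q := Real.rpow_le_rpow h4q.le hγA hq.le
  -- the main real inequality
  have hmain : P * ((1+η)*(c*ra^q)) ≤ (1-η)*(c*rb^q) := by
    have hra2 : ra ≤ 2*r₁ := by rw [hradef]; linarith only [hs₁D, hr₁s, hr₁0.le]
    have hra0 : (0:ℝ) ≤ ra := by rw [hradef]; linarith only [hr₁0.le, hD0]
    have hβL1 : (1:ℝ) ≤ β^L := one_le_pow₀ hβ1
    have hβL0 : (0:ℝ) ≤ β^L := by linarith only [hβL1]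
    have hrb' : β^L * r₁ / 2 ≤ rb := by
      have hDr : D ≤ r₁/8 := by linarith only [hs₁D, hr₁s]
      have hrr : r₁ ≤ β^L * r₁ := le_mul_of_one_le_left hr₁0.le hβL1
      rw [hrbdef]
      linarith only [hvstar, hDr, hrr, hr₁0.le]
    have h1 : ra^q ≤ (2*r₁)^q := Real.rpow_le_rpow hra0 hra2 hq.le
    have hbl2 : (0:ℝ) ≤ β^L * r₁ / 2 :=
      div_nonneg (mul_nonneg hβL0 hr₁0.le) (by norm_num)
    have h2 : (β^L * r₁/2)^q ≤ rb^q := Real.rpow_le_rpow hbl2 hrb' hq.le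
    have h2r0 : (0:ℝ) ≤ 2*r₁ := by linarith only [hr₁0.le]
    have h3 : (β^L * r₁/2)^q = (β^L/4)^q * (2*r₁)^q := by
      rw [show β^L * r₁/2 = (β^L/4) * (2*r₁) by ring,
        Real.mul_rpow (div_nonneg hβL0 (by norm_num)) h2r0]
    have h4L : (4:ℝ) ≤ (4:ℝ)^L := by
      calc (4:ℝ) = 4^1 := (pow_one 4).symm
        _ ≤ 4^L := pow_le_pow_right₀ (by norm_num) hL1
    have hγL : γ^L ≤ β^L/4 := by
      have hγLeq : γ^L = β^L/4^L := by rw [hγdef, div_pow]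
      rw [hγLeq]
      exact div_le_div_of_nonneg_left hβL0 (by norm_num) h4L
    have hswap : (γ^q)^L = (γ^L)^q := by
      rw [← Real.rpow_natCast (γ^q) L, ← Real.rpow_natCast γ L,
        ← Real.rpow_mul hγ0.le, ← Real.rpow_mul hγ0.le, mul_comm]
    have h4 : ((4:ℝ)^L : ℝ) ≤ (β^L/4)^q := by
      calc ((4:ℝ)^L) ≤ (γ^q)^L := pow_le_pow_left₀ (by norm_num) hγ4 L
        _ = (γ^L)^q := hswap
        _ ≤ (β^L/4)^q :=
            Real.rpow_le_rpow (pow_nonneg hγ0.le L) hγL hq.le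
    have h2L2 : (2:ℝ) ≤ 2^L := by
      calc (2:ℝ) = 2^1 := (pow_one 2).symm
        _ ≤ 2^L := pow_le_pow_right₀ one_le_two hL1
    have h5 : (2:ℝ)^L * (1+η) ≤ (1-η) * 4^L := by
      have h44 : (4:ℝ)^L = 2^L * 2^L := by
        rw [← mul_pow]; norm_num
      have ha0 : (0:ℝ) ≤ 2^L := by positivity
      have e1 : (2:ℝ)^L*(1+η) ≤ (2:ℝ)^L*(4/3) :=
        mul_le_mul_of_nonneg_left (by linarith only [hη3]) ha0
      have e2 : (0:ℝ) ≤ (2/3) * (2^L * ((2:ℝ)^L - 2)) :=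
        mul_nonneg (by norm_num) (mul_nonneg ha0 (by linarith only [h2L2]))
      have e3 : (2:ℝ)^L*(4/3) ≤ (2/3)*((2:ℝ)^L*2^L) := by linarith only [e2]
      have e4 : (2/3)*((2:ℝ)^L*2^L) ≤ (1-η)*((2:ℝ)^L*2^L) :=
        mul_le_mul_of_nonneg_right (by linarith only [hη3]) (mul_nonneg ha0 ha0)
      rw [h44]
      linarith only [e1, e3, e4]
    have hcra : (0:ℝ) ≤ c*(2*r₁)^q := mul_nonneg hc.le (Real.rpow_nonneg h2r0 q)
    calc P * ((1+η)*(c*ra^q))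
        ≤ (2:ℝ)^L * ((1+η)*(c*(2*r₁)^q)) := by
          apply mul_le_mul hP2L _ _ (by positivity)
          · exact mul_le_mul_of_nonneg_left (mul_le_mul_of_nonneg_left h1 hc.le)
              (by linarith only [hη0])
          · exact mul_nonneg (by linarith only [hη0])
              (mul_nonneg hc.le (Real.rpow_nonneg hra0 q))
      _ = ((2:ℝ)^L * (1+η)) * (c*(2*r₁)^q) := by ring
      _ ≤ ((1-η) * 4^L) * (c*(2*r₁)^q) := mul_le_mul_of_nonneg_right h5 hcra
      _ ≤ ((1-η) * (β^L/4)^q) * (c*(2*r₁)^q) := by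
          apply mul_le_mul_of_nonneg_right _ hcra
          exact mul_le_mul_of_nonneg_left h4 (by linarith only [hη3])
      _ = (1-η) * (c * ((β^L * r₁/2)^q)) := by rw [h3]; ring
      _ ≤ (1-η)*(c*rb^q) := by
          apply mul_le_mul_of_nonneg_left _ (by linarith only [hη3] : (0:ℝ) ≤ 1-η)
          exact mul_le_mul_of_nonneg_left h2 hc.le
  -- ENNReal assembly
  have hrapos : (0:ℝ) < ra := lt_of_lt_of_le hT0 hraT
  have hrbpos : (0:ℝ) < rb := lt_of_lt_of_le hT0 hrbT
  have hMa := (hest ra hraT).2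
  have hMb := (hest rb hrbT).1
  have hfina : μ (closedBall x₀ ra) ≠ ⊤ := (hpos x₀ ra hrapos).2.ne
  calc ENNReal.ofReal P * μ (⋃ x ∈ X₀, closedBall x (u x 1))
      ≤ ENNReal.ofReal P * μ (closedBall x₀ ra) :=
        mul_le_mul_right (measure_mono hU_sub) _
    _ = ENNReal.ofReal P * ENNReal.ofReal (μ (closedBall x₀ ra)).toReal := by
        rw [ENNReal.ofReal_toReal hfina]
    _ = ENNReal.ofReal (P * (μ (closedBall x₀ ra)).toReal) :=
        (ENNReal.ofReal_mul hP0).symm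
    _ ≤ μ (closedBall x₀ rb) := by
        apply ENNReal.ofReal_le_of_le_toReal
        calc P * (μ (closedBall x₀ ra)).toReal ≤ P * ((1+η)*(c*ra^q)) :=
              mul_le_mul_of_nonneg_left hMa hP0
          _ ≤ (1-η)*(c*rb^q) := hmain
          _ ≤ (μ (closedBall x₀ rb)).toReal := hMb
    _ ≤ μ (⋃ x ∈ X₀, closedBall x (v x (L+1))) := measure_mono hV_sup
end

section
/- (Transference principle) Let Γ be a group of polynomial growth with word metric and counting measure, and let (S_{B(g,r)}) be a stationary real-valued process on a probability space (X,𝒫) indexed by closed balls of Γ. Fix k, l ∈ ℕ, an interval (α,β), and measurable events Q_{g,l}^k := {x : (S_{B(g,i)}(x))_{i=1}^l has at least k upcrossings across (α,β)} and events R_g^k (defined covariantly so that ℙ(Q_{g,l}^k \ R_g^k) = ℙ(Q_{e,l}^k \ R_e^k) for all g). For x ∈ X and M ∈ ℕ, set E_{M,l,x}^k := {g ∈ B(M) : x ∈ Q_{g,l}^k \ R_g^k}. Suppose t ≥ 0 and M₀ ∈ ℕ are such that for all M ≥ M₀ and ℙ-almost all x, |E_{M,l,x}^k| ≤ t|B(M)|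 + o_{x,l}(|B(M)|), where the error term divided by |B(M)| tends to 0 uniformly in x. Then ℙ(Q_{e,l}^k \ R_e^k) ≤ t. -/
/-!
Double counting: integrating `x ↦ |E_{M,l,x}^k|` against `ℙ` gives `|B(M)| · ℙ(Q_e \ R_e)`,
since every `g ∈ B(M)` contributes `ℙ(Q_g \ R_g) = ℙ(Q_e \ R_e)`. The almost sure bound then
yields `ℙ(Q_e \ R_e) ≤ t + err M / |B(M)|` for every `M ≥ M₀`, and the error term vanishes as
`M → ∞`. Balls are finite because `S` is a finite generating set, and `Q_g` is measurable because
the upcrossing condition only involves the first `k` entries of the index sequences.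
-/

open Filter MeasureTheory

/-- The word norm of `g` with respect to a generating set `S` of a group. -/
noncomputable def wordNorm {Γ : Type*} [Group Γ] (S : Set Γ) (g : Γ) : ℕ :=
  sInf {n : ℕ | ∃ f : Fin n → Γ, (∀ i, f i ∈ S ∨ (f i)⁻¹ ∈ S) ∧ g = (List.ofFn f).prod}

/-- The closed ball of radius `r` around `g` for the right-invariant word metric
`d(x,y) = ‖x y⁻¹‖`. -/
def wordBall {Γ : Type*} [Group Γ] (S : Set Γ) (g : Γ) (r : ℕ) : Set Γ :=
  {y : Γ | wordNorm S (g * y⁻¹) ≤ r}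

open Finset
open scoped ENNReal Pointwise Topology

lemma Set.Finite.pow {M : Type*} [Monoid M] {s : Set M} (hs : s.Finite) (n : ℕ) :
    (s ^ n).Finite := by
  induction n with
  | zero => simp
  | succ n ih => rw [pow_succ]; exact ih.mul hs

section WordMetric

variable {Γ : Type*} [Group Γ] {S : Set Γ}

lemma wordNorm_one : wordNorm S 1 = 0 :=
  Nat.eq_zero_of_le_zero <| Nat.sInf_le ⟨Fin.elim0, fun i => i.elim0, by simp⟩

lemma one_mem_wordBall (M : ℕ) : (1 : Γ) ∈ wordBall S 1 M := by
  simp [wordBall, wordNorm_one]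

lemma mem_pow_wordNorm (hSgen : Subgroup.closure S = ⊤) (g : Γ) :
    g ∈ (S ∪ S⁻¹) ^ wordNorm S g := by
  have hg : g ∈ Submonoid.closure (S ∪ S⁻¹) := by
    rw [← Subgroup.closure_toSubmonoid, hSgen]
    trivial
  obtain ⟨L, hL, hprod⟩ := Submonoid.exists_list_of_mem_closure hg
  obtain ⟨f, hf, hfg⟩ := Nat.sInf_mem (s := {n : ℕ | ∃ f : Fin n → Γ,
      (∀ i, f i ∈ S ∨ (f i)⁻¹ ∈ S) ∧ g = (List.ofFn f).prod})
    ⟨L.length, L.get, fun i => hL _ (L.get_mem i), by rw [List.ofFn_get, hprod]⟩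
  exact Set.mem_pow.2 ⟨fun i => ⟨f i, hf i⟩, hfg.symm⟩

lemma finite_wordBall (hSfin : S.Finite) (hSgen : Subgroup.closure S = ⊤) (M : ℕ) :
    (wordBall S 1 M).Finite := by
  have hle : {g : Γ | wordNorm S g ≤ M}.Finite :=
    ((Set.finite_le_nat M).biUnion fun n _ => (hSfin.union hSfin.inv).pow n).subset
      fun g hg => Set.mem_biUnion hg (mem_pow_wordNorm hSgen g)
  convert hle.inv using 1
  ext y
  simp [wordBall]

end WordMetric

def upcrossingEvent {X : Type*} (f : ℕ → X → ℝ) (α β : ℝ) (k l : ℕ) : Set X :=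
  {x | ∃ i j : ℕ → ℕ,
    (∀ m < k, 1 ≤ i m ∧ i m < j m ∧ j m ≤ l ∧ f (i m) x < α ∧ β < f (j m) x) ∧
    (∀ m, m + 1 < k → j m < i (m + 1))}

section Upcrossings

variable {X : Type*} [MeasurableSpace X]

lemma measurable_exists_of_dependsOn_Iio {ι : Type*} [Countable ι] [Inhabited ι] (n : ℕ)
    {p : (ℕ → ι) → X → Prop} (hp : ∀ i, Measurable (p i))
    (hloc : ∀ i i' : ℕ → ι, (∀ m < n, i m = i' m) → ∀ x, p i x → p i' x) :
    Measurable fun x => ∃ i, p i x := by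
  let extend : (Fin n → ι) → ℕ → ι := fun v m => if h : m < n then v ⟨m, h⟩ else default
  have hext : (fun x => ∃ i, p i x) = fun x => ∃ v, p (extend v) x := by
    ext x
    exact ⟨fun ⟨i, hi⟩ => ⟨fun m => i m, hloc i _ (fun m hm => by simp [extend, hm]) x hi⟩,
      fun ⟨v, hv⟩ => ⟨_, hv⟩⟩
  rw [hext]
  exact .exists fun v => hp _

lemma measurableSet_upcrossingEvent {f : ℕ → X → ℝ} (hf : ∀ n, Measurable (f n))
    (α β : ℝ) (k l : ℕ) : MeasurableSet (upcrossingEvent f α β k l) := by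
  refine Measurable.setOf (measurable_exists_of_dependsOn_Iio k (fun i => ?_) ?_)
  · refine measurable_exists_of_dependsOn_Iio k (fun j => ?_) ?_
    · fun_prop
    rintro j j' h x ⟨h1, h2⟩
    exact ⟨fun m hm => h m hm ▸ h1 m hm, fun m hm => h m (by omega) ▸ h2 m hm⟩
  rintro i i' h x ⟨j, h1, h2⟩
  exact ⟨j, fun m hm => h m hm ▸ h1 m hm, fun m hm => h (m + 1) hm ▸ h2 m hm⟩

end Upcrossings

section Counting

variable {ι X : Type*} [MeasurableSpace X]

open Classical in
lemma sum_measure_le_of_ae_card_le (μ : Measure X) (s : Finset ι) {A : ι → Set X}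
    (hA : ∀ i ∈ s, MeasurableSet (A i)) {b : ℝ≥0∞}
    (hb : ∀ᵐ x ∂μ, (#{i ∈ s | x ∈ A i} : ℝ≥0∞) ≤ b) :
    ∑ i ∈ s, μ (A i) ≤ b * μ Set.univ := by
  calc ∑ i ∈ s, μ (A i)
      = ∫⁻ x, ∑ i ∈ s, (A i).indicator 1 x ∂μ := by
        rw [lintegral_finsetSum _ fun i hi => measurable_one.indicator (hA i hi)]
        exact Finset.sum_congr rfl fun i hi => (lintegral_indicator_one (hA i hi)).symm
    _ = ∫⁻ x, (#{i ∈ s | x ∈ A i} : ℝ≥0∞) ∂μ := by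
        congr with x
        simp only [Finset.card_filter, Nat.cast_sum, Set.indicator_apply]
        simp
    _ ≤ ∫⁻ _, b ∂μ := lintegral_mono_ae hb
    _ = b * μ Set.univ := lintegral_const b

lemma measure_le_ofReal_of_ae_card_le (μ : Measure X) [IsProbabilityMeasure μ] {s : Set ι}
    (hs : s.Finite) (hne : s.Nonempty) {A : ι → Set X} (hA : ∀ i ∈ s, MeasurableSet (A i))
    {c : ℝ≥0∞} (hc : ∀ i ∈ s, μ (A i) = c) {t e : ℝ}
    (hb : ∀ᵐ x ∂μ, (Nat.card {i | i ∈ s ∧ x ∈ A i} : ℝ) ≤ t * Nat.card s + e) :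
    c ≤ ENNReal.ofReal (t + e / Nat.card s) := by
  classical
  lift s to Finset ι using hs
  have hcard : Nat.card (s : Set ι) = #s := by simp
  have hcard_filter (x : X) : Nat.card {i | i ∈ (s : Set ι) ∧ x ∈ A i} = #{i ∈ s | x ∈ A i} := by
    rw [← Set.ncard_coe_finset, Finset.coe_filter, Nat.card_coe_set_eq]; rfl
  have hpos : (0 : ℝ) < #s := by simpa using hne
  have hsum := sum_measure_le_of_ae_card_le μ s hA
    (b := ENNReal.ofReal (t * #s + e)) (hb.mono fun x hx => by
      rw [hcard_filter, hcard] at hx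
      simpa using ENNReal.ofReal_le_ofReal hx)
  rw [Finset.sum_congr rfl hc, Finset.sum_const, nsmul_eq_mul, measure_univ, mul_one, mul_comm,
    ← ENNReal.le_div_iff_mul_le (.inl (by simpa using hpos.ne')) (.inl (by simp)),
    ← ENNReal.ofReal_natCast, ← ENNReal.ofReal_div_of_pos hpos] at hsum
  rw [hcard]
  convert hsum using 2
  field_simp

end Counting

theorem stmt16_general {Γ : Type*} [Group Γ] (S : Set Γ) (hSfin : S.Finite)
    (hSgen : Subgroup.closure S = ⊤)
    {X : Type*} [MeasurableSpace X] (P : Measure X) [IsProbabilityMeasure P]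
    -- a stationary process indexed by the balls B(g,r):
    (F : Γ → ℕ → X → ℝ) (hFmeas : ∀ g r, Measurable (F g r))
    (α β : ℝ) (k l : ℕ)
    -- the events Q_{g,l}^k (at least k upcrossings of (S_{B(g,i)})_{i=1}^l):
    (Q : Γ → Set X)
    (hQ : ∀ g, Q g = {x | ∃ i j : ℕ → ℕ,
      (∀ m < k, 1 ≤ i m ∧ i m < j m ∧ j m ≤ l ∧ F g (i m) x < α ∧ β < F g (j m) x) ∧
      (∀ m, m + 1 < k → j m < i (m + 1))})
    -- the events R_g^k, defined covariantly:
    (R : Γ → Set X) (hRmeas : ∀ g, MeasurableSet (R g))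
    (hcov : ∀ g : Γ, P (Q g \ R g) = P (Q 1 \ R 1))
    (t : ℝ) (M₀ : ℕ) (err : ℕ → ℝ)
    (herr : Tendsto (fun M : ℕ => err M / (Nat.card (wordBall S 1 M) : ℝ))
      atTop (nhds 0))
    (hbound : ∀ M : ℕ, M₀ ≤ M → ∀ᵐ x ∂P,
      (Nat.card {g : Γ | g ∈ wordBall S 1 M ∧ x ∈ Q g \ R g} : ℝ)
        ≤ t * (Nat.card (wordBall S 1 M) : ℝ) + err M) :
    P (Q 1 \ R 1) ≤ ENNReal.ofReal t := by
  have hQR (g : Γ) : MeasurableSet (Q g \ R g) := by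
    have hQg : Q g = upcrossingEvent (F g) α β k l := hQ g
    exact hQg ▸ (measurableSet_upcrossingEvent (hFmeas g) α β k l).diff (hRmeas g)
  have hdensity (M : ℕ) (hM : M₀ ≤ M) :
      P (Q 1 \ R 1) ≤ ENNReal.ofReal (t + err M / Nat.card (wordBall S 1 M)) :=
    measure_le_ofReal_of_ae_card_le P (finite_wordBall hSfin hSgen M) ⟨1, one_mem_wordBall M⟩
      (fun g _ => hQR g) (fun g _ => hcov g) (hbound M hM)
  have hlim : Tendsto (fun M => ENNReal.ofReal (t + err M / Nat.card (wordBall S 1 M))) atTop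
      (𝓝 (ENNReal.ofReal t)) :=
    (ENNReal.continuous_ofReal.tendsto t).comp (by simpa only [add_zero] using herr.const_add t)
  exact ge_of_tendsto hlim (eventually_atTop.2 ⟨M₀, hdensity⟩)

/-- Transference principle: a uniform density bound on the sets
`E_{M,l,x}^k = {g ∈ B(M) : x ∈ Q_g^k \ R_g^k}` bounds `ℙ(Q_e^k \ R_e^k)`. -/
theorem stmt16 {Γ : Type*} [Group Γ] (S : Set Γ) (hSfin : S.Finite)
    (hSgen : Subgroup.closure S = ⊤)
    -- Γ has polynomial growth:
    (hpoly : ∃ (Cg : ℝ) (dg : ℕ), 0 < Cg ∧ ∀ n : ℕ, 1 ≤ n →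
      (Nat.card (wordBall S 1 n) : ℝ) ≤ Cg * (n : ℝ) ^ dg)
    {X : Type*} [MeasurableSpace X] (P : Measure X) [IsProbabilityMeasure P]
    -- a stationary process indexed by the balls B(g,r):
    (F : Γ → ℕ → X → ℝ) (hFmeas : ∀ g r, Measurable (F g r))
    (hstat : ∀ h : Γ,
      Measure.map (fun x => fun p : Γ × ℕ => F (p.1 * h) p.2 x) P =
      Measure.map (fun x => fun p : Γ × ℕ => F p.1 p.2 x) P)
    (α β : ℝ) (hαβ : α < β) (k l : ℕ)
    -- the events Q_{g,l}^k (at least k upcrossings of (S_{B(g,i)})_{i=1}^l):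
    (Q : Γ → Set X)
    (hQ : ∀ g, Q g = {x | ∃ i j : ℕ → ℕ,
      (∀ m < k, 1 ≤ i m ∧ i m < j m ∧ j m ≤ l ∧ F g (i m) x < α ∧ β < F g (j m) x) ∧
      (∀ m, m + 1 < k → j m < i (m + 1))})
    -- the events R_g^k, defined covariantly:
    (R : Γ → Set X) (hRmeas : ∀ g, MeasurableSet (R g))
    (hcov : ∀ g : Γ, P (Q g \ R g) = P (Q 1 \ R 1))
    (t : ℝ) (ht : 0 ≤ t) (M₀ : ℕ) (err : ℕ → ℝ)
    (herr : Tendsto (fun M : ℕ => err M / (Nat.card (wordBall S 1 M) : ℝ))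
      atTop (nhds 0))
    (hbound : ∀ M : ℕ, M₀ ≤ M → ∀ᵐ x ∂P,
      (Nat.card {g : Γ | g ∈ wordBall S 1 M ∧ x ∈ Q g \ R g} : ℝ)
        ≤ t * (Nat.card (wordBall S 1 M) : ℝ) + err M) :
    P (Q 1 \ R 1) ≤ ENNReal.ofReal t :=
  stmt16_general S hSfin hSgen P F hFmeas α β k l Q hQ R hRmeas hcov t M₀ err herr hbound
end
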